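/- arXiv:2312.14043 — 5 statements merged into one kernel-verified Lean document; each statement's English description precedes it below -/
import Mathlib

section
/- The elementary dual equivalence operator D_i on standard Young tableaux is an involution: D_i(D_i(T)) = T for every standard tableau T with n boxes and every integer 1 < i < n. -/
open scoped Classical

/-- A cell `(row, column)` of a Young diagram. -/
abbrev Cell := ℕ × ℕ

/-- A standard Young tableau with `n` boxes, encoded by the position `p k` of each
entry `k ∈ [n]`: the positions are distinct, and for each `k ≤ n` the set of
positions of the entries `1, ..., k` is a Young diagram (a lower set in `ℕ × ℕ`). -/
def IsStdTab (n : ℕ) (p : ℕ → Cell) : Prop :=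
  Set.InjOn p (Set.Icc 1 n) ∧
  ∀ k, k ≤ n → ∀ j ∈ Set.Icc 1 k, ∀ c : Cell,
    c.1 ≤ (p j).1 → c.2 ≤ (p j).2 → ∃ m ∈ Set.Icc 1 k, p m = c

/-- `readLt a b` : the cell `a` comes strictly before the cell `b` in the
row reading order (rows read from bottom to top, left to right). -/
def readLt (a b : Cell) : Prop := b.1 < a.1 ∨ (a.1 = b.1 ∧ a.2 < b.2)

/-- The entry `x` lies (strictly) between the entries `y` and `z` in the row
reading word of the tableau with position function `p`. -/
def btwIn (p : ℕ → Cell) (x y z : ℕ) : Prop :=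
  (readLt (p y) (p x) ∧ readLt (p x) (p z)) ∨ (readLt (p z) (p x) ∧ readLt (p x) (p y))

/-- The elementary dual equivalence operator `D_i`: it equals `s_{i-1}(T)` if `i+1`
lies between `i` and `i-1` in the reading word, `s_i(T)` if `i-1` lies between `i`
and `i+1`, and `T` otherwise; here `s_j(T)` swaps the entries `j` and `j+1`. -/
noncomputable def Dop (i : ℕ) (p : ℕ → Cell) : ℕ → Cell :=
  if btwIn p (i + 1) i (i - 1) then p ∘ (Equiv.swap (i - 1) i)
  else if btwIn p (i - 1) i (i + 1) then p ∘ (Equiv.swap i (i + 1))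
  else p

/-!
`D_i` only looks at the relative reading order of the entries `i - 1`, `i`, `i + 1`. In the
first case `s_{i-1}` exchanges the two outer entries of a betweenness relation, which is
symmetric in them, so `D_i` applies `s_{i-1}` again. In the second case `s_i` exchanges `i` and
`i + 1`: `i - 1` still lies between them, and since of three cells in a strict order only one
lies between the other two, the first case cannot occur, so `D_i` applies `s_i` again.
-/

theorem readLt_irrefl (a : Cell) : ¬ readLt a a := by
  unfold readLt; omega

theorem readLt_trans {a b c : Cell} : readLt a b → readLt b c → readLt a c := by
  unfold readLt; omega

theorem readLt_asymm {a b : Cell} (h : readLt a b) : ¬ readLt b a :=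
  fun h' => readLt_irrefl a (readLt_trans h h')

section btwIn

variable {p : ℕ → Cell} {x y z : ℕ}

theorem btwIn_comm : btwIn p x y z ↔ btwIn p x z y := Or.comm

theorem btwIn_comp (f : ℕ → ℕ) : btwIn (p ∘ f) x y z ↔ btwIn p (f x) (f y) (f z) := Iff.rfl

theorem btwIn.ne (h : btwIn p x y z) : x ≠ y := by
  rintro rfl
  rcases h with ⟨h, -⟩ | ⟨-, h⟩ <;> exact readLt_irrefl _ h

theorem btwIn.not_btwIn_swap (h : btwIn p x y z) : ¬ btwIn p y x z := by
  rintro (⟨hxy, hyz⟩ | ⟨hzy, hyx⟩) <;> rcases h with ⟨hyx, hxz⟩ | ⟨hzx, hxy⟩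
  · exact readLt_asymm hxy hyx
  · exact readLt_irrefl _ (readLt_trans (readLt_trans hzx hxy) hyz)
  · exact readLt_irrefl _ (readLt_trans (readLt_trans hzy hyx) hxz)
  · exact readLt_asymm hyx hxy

end btwIn

theorem comp_swap_comp_swap {α β : Type*} [DecidableEq α] (f : α → β) (a b : α) :
    (f ∘ Equiv.swap a b) ∘ Equiv.swap a b = f :=
  funext fun x => congrArg f (Equiv.swap_apply_self a b x)

section Dop

variable {i : ℕ} {p : ℕ → Cell}

theorem Dop_of_btwIn_succ (h : btwIn p (i + 1) i (i - 1)) :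
    Dop i p = p ∘ Equiv.swap (i - 1) i :=
  if_pos h

theorem Dop_of_btwIn_pred (h₁ : ¬ btwIn p (i + 1) i (i - 1)) (h₂ : btwIn p (i - 1) i (i + 1)) :
    Dop i p = p ∘ Equiv.swap i (i + 1) := by
  rw [Dop, if_neg h₁, if_pos h₂]

theorem Dop_of_not_btwIn (h₁ : ¬ btwIn p (i + 1) i (i - 1)) (h₂ : ¬ btwIn p (i - 1) i (i + 1)) :
    Dop i p = p := by
  rw [Dop, if_neg h₁, if_neg h₂]

theorem Dop_Dop_of_btwIn_succ (h : btwIn p (i + 1) i (i - 1)) : Dop i (Dop i p) = p := by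
  have h' : btwIn (p ∘ Equiv.swap (i - 1) i) (i + 1) i (i - 1) := by
    rw [btwIn_comp, Equiv.swap_apply_right, Equiv.swap_apply_left,
      Equiv.swap_apply_of_ne_of_ne (by omega) (by omega)]
    exact btwIn_comm.mp h
  rw [Dop_of_btwIn_succ h, Dop_of_btwIn_succ h', comp_swap_comp_swap]

theorem Dop_Dop_of_btwIn_pred (h₁ : ¬ btwIn p (i + 1) i (i - 1))
    (h₂ : btwIn p (i - 1) i (i + 1)) : Dop i (Dop i p) = p := by
  have hi : i - 1 ≠ i := h₂.ne
  have hfix : Equiv.swap i (i + 1) (i - 1) = i - 1 :=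
    Equiv.swap_apply_of_ne_of_ne hi (by omega)
  have h₁' : ¬ btwIn (p ∘ Equiv.swap i (i + 1)) (i + 1) i (i - 1) := by
    rw [btwIn_comp, Equiv.swap_apply_right, Equiv.swap_apply_left, hfix, btwIn_comm]
    exact h₂.not_btwIn_swap
  have h₂' : btwIn (p ∘ Equiv.swap i (i + 1)) (i - 1) i (i + 1) := by
    rw [btwIn_comp, Equiv.swap_apply_right, Equiv.swap_apply_left, hfix]
    exact btwIn_comm.mp h₂
  rw [Dop_of_btwIn_pred h₁ h₂, Dop_of_btwIn_pred h₁' h₂', comp_swap_comp_swap]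

end Dop

theorem Dop_involution_general (i : ℕ) (p : ℕ → Cell) : Dop i (Dop i p) = p := by
  by_cases h₁ : btwIn p (i + 1) i (i - 1)
  · exact Dop_Dop_of_btwIn_succ h₁
  by_cases h₂ : btwIn p (i - 1) i (i + 1)
  · exact Dop_Dop_of_btwIn_pred h₁ h₂
  rw [Dop_of_not_btwIn h₁ h₂, Dop_of_not_btwIn h₁ h₂]

/-- The elementary dual equivalence operator `D_i` is an involution on standard
Young tableaux with `n` boxes, for `1 < i < n`. -/
theorem Dop_involution (n i : ℕ) (hi1 : 1 < i) (hi2 : i < n)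
    (p : ℕ → Cell) (hp : IsStdTab n p) : Dop i (Dop i p) = p :=
  Dop_involution_general i p
end

section
/- For signed permutations w, v ∈ W^BC_n related by a D_2^r relation (i.e., v is obtained from w by swapping adjacent letters w_j and w_{j+1} of opposite signs for some 1 ≤ j ≤ r, with r ≥ 1), the recording r-domino tableau Q_D^r(v) is obtained from Q_D^r(w) by interchanging the labels j and j+1. -/
/-- A domino, given by its top-left cell together with its orientation
(`true` = horizontal, `false` = vertical). -/
abbrev Dom := Cell × Bool

/-- The two cells covered by a domino. -/
def cellsD (d : Dom) : Finset Cell :=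
  {d.1, if d.2 then (d.1.1, d.1.2 + 1) else (d.1.1 + 1, d.1.2)}

/-- A domino tableau, recorded as a list of (label, domino) pairs. -/
abbrev Tab := List (ℕ × Dom)

/-- The set of cells covered by the dominoes of a tableau. -/
def tabCells (T : Tab) : Finset Cell := (T.map (fun p => cellsD p.2)).foldr (· ∪ ·) ∅

/-- The cells of the staircase 2-core `δ_r = (r, r-1, ..., 1)`. -/
def coreCells (r : ℕ) : Finset Cell :=
  (Finset.Icc 1 r ×ˢ Finset.Icc 1 r).filter (fun c => c.1 + c.2 ≤ r + 1)

/-- Garfinkle's bumping procedure: repeatedly merge the pair `(B, C)`, where at each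
step the smallest labelled domino `γ_j` of `C` is adjoined to `B`, after being moved
according to how its cells overlap the shape of `B` (the four cases of the algorithm). -/
def bumpLoop (core : Finset Cell) : Tab → List (ℕ × Dom) → Tab
  | B, [] => B
  | B, (j, d) :: rest =>
    let Bc := core ∪ tabCells B
    let dc := cellsD d
    if dc ∩ Bc = ∅ then
      bumpLoop core (B ++ [(j, d)]) rest
    else if (dc ∩ Bc).card = 1 then
      let o := if d.1 ∈ Bc then (if d.2 then (d.1.1, d.1.2 + 1) else (d.1.1 + 1, d.1.2)) else d.1
      bumpLoop core (B ++ [(j, (o, !d.2))]) rest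
    else
      let nd : Dom := if d.2 then ((d.1.1 + 1, d.1.2), true) else ((d.1.1, d.1.2 + 1), false)
      bumpLoop core (B ++ [(j, nd)]) rest

/-- One more than the number of cells in row `r` of a shape: the column at which a new
horizontal domino is appended to the first row. -/
def rowEnd (cells : Finset Cell) (r : ℕ) : ℕ := (cells.filter (fun c => c.1 = r)).card + 1

/-- One more than the number of cells in column `cl` of a shape: the row at which a new
vertical domino is appended to the first column. -/
def colEnd (cells : Finset Cell) (cl : ℕ) : ℕ := (cells.filter (fun c => c.2 = cl)).card + 1

/-- Garfinkle's domino insertion `T ← a` of a signed letter `a` into an `r`-domino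
tableau `T`: start from `B` = the dominoes of `T` with labels `< |a|` together with a
new horizontal domino labelled `|a|` at the end of the first row (if `a > 0`) or a new
vertical domino at the end of the first column (if `a < 0`), and bump the remaining
dominoes of `T` back in, in increasing label order. -/
def dInsert (r : ℕ) (T : Tab) (a : ℤ) : Tab :=
  let i := a.natAbs
  let B := T.filter (fun p => decide (p.1 < i))
  let C := T.filter (fun p => decide (i < p.1))
  let Bc := coreCells r ∪ tabCells B
  let nd : Dom := if 0 < a then ((1, rowEnd Bc 1), true) else ((colEnd Bc 1, 1), false)
  bumpLoop (coreCells r) (B ++ [(i, nd)]) C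

/-- The insertion `r`-domino tableau `P_D^r(w)` of a signed word `w`. -/
def PD (r : ℕ) (w : List ℤ) : Tab := w.foldl (dInsert r) []

/-- The cells of the domino labelled `k` in the recording `r`-domino tableau
`Q_D^r(w)`: the cells added to the insertion tableau at the `k`-th step. -/
def Qcell (r : ℕ) (w : List ℤ) (k : ℕ) : Finset Cell :=
  tabCells (PD r (w.take k)) \ tabCells (PD r (w.take (k - 1)))

/-- The cells of the domino labelled `i` in an insertion tableau. -/
def pcells (T : Tab) (i : ℕ) : Finset Cell :=
  ((T.filter (fun p => decide (p.1 = i))).map (fun p => cellsD p.2)).foldr (· ∪ ·) ∅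

/-!
While a signed word has at most `r` letters of each sign, its insertion tableau splits into two
halves that never meet: the positive letters occupy horizontal dominoes in the rows to the right of
the core `δ_r`, the negative letters vertical dominoes in the columns below it. On the horizontal
half Garfinkle's bumping reduces to a column insertion: the new label goes on top of the leftmost
column whose top label is larger, and that column moves down one row (`Model.insertLabel`). The
vertical half is the transpose of this, because insertion commutes with transposing the tableau and
negating the letter. Each half depends only on the subword of its own sign.

Since `j ≤ r`, the prefix `w_1 ⋯ w_{j+1}` has at most `r` letters of each sign. Swapping the
opposite-signed letters `w_j, w_{j+1}` therefore leaves the insertion tableau of this prefix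
unchanged, and each of the two letters adds the same domino whether it is inserted before or after
the other; all later steps start from the same tableau.
-/

theorem List.mem_iff_lt_length_of_pred_mem {l : List ℕ} (hnd : l.Nodup)
    (hpred : ∀ k, k + 1 ∈ l → k ∈ l) (x : ℕ) : x ∈ l ↔ x < l.length := by
  have hdown : ∀ x ∈ l, ∀ y ≤ x, y ∈ l := by
    intro x hx y hy
    induction x with
    | zero => rwa [Nat.le_zero.1 hy]
    | succ x ih => rcases hy.lt_or_eq with hy | rfl; exacts [ih (hpred x hx) (by omega), hx]
  rw [← List.toFinset_card_of_nodup hnd]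
  constructor
  · intro hx
    calc x < (Finset.range (x + 1)).card := by simp
      _ ≤ l.toFinset.card := Finset.card_le_card fun y hy =>
        List.mem_toFinset.2 (hdown x hx y (by simpa [Nat.lt_succ_iff] using hy))
  · intro hx
    by_contra hxl
    have : l.toFinset ⊆ Finset.range x := fun y hy => by
      have := List.mem_toFinset.1 hy
      simp only [Finset.mem_range]
      by_contra hyx
      exact hxl (hdown y this x (by omega))
    simpa using hx.trans_le (Finset.card_le_card this)

theorem List.filter_pair_comm {α : Type*} {p : α → Bool} {a b : α} (h : ¬(p a ∧ p b)) :
    [a, b].filter p = [b, a].filter p := by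
  cases ha : p a <;> cases hb : p b <;> simp_all

theorem List.exists_eq_append_getD_cons {α : Type*} (l : List α) (d : α) {i : ℕ}
    (h : i + 1 < l.length) :
    ∃ P S, l = P ++ l.getD i d :: l.getD (i + 1) d :: S ∧ P.length = i := by
  refine ⟨l.take i, l.drop (i + 2), ?_, by simp; omega⟩
  rw [List.getD_eq_getElem _ _ (by omega), List.getD_eq_getElem _ _ h,
    ← List.drop_eq_getElem_cons h, ← List.drop_eq_getElem_cons (by omega), List.take_append_drop]

theorem List.set_set_append_cons_cons {α : Type*} (P S : List α) (x y a b : α) :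
    ((P ++ x :: y :: S).set P.length a).set (P.length + 1) b = P ++ a :: b :: S := by
  simp

theorem List.take_append_cons_cons {α : Type*} (P S : List α) (x y : α) (t : ℕ) :
    (P ++ x :: y :: S).take (P.length + 2 + t) = (P ++ [x, y]) ++ S.take t := by
  rw [show P ++ x :: y :: S = (P ++ [x, y]) ++ S by simp,
    show P.length + 2 + t = (P ++ [x, y]).length + t by simp, List.take_length_add_append]

namespace DominoInsertion

theorem mem_tabCells {x : Cell} : ∀ {T : Tab}, x ∈ tabCells T ↔ ∃ p ∈ T, x ∈ cellsD p.2
  | [] => by simp [tabCells]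
  | p :: T => by
    simp only [tabCells, List.map_cons, List.foldr_cons, Finset.mem_union, List.mem_cons]
    rw [show ((T.map (fun p => cellsD p.2)).foldr (· ∪ ·) ∅ : Finset Cell) = tabCells T from rfl,
      mem_tabCells]
    grind

theorem mem_coreCells {r : ℕ} {x : Cell} :
    x ∈ coreCells r ↔ 1 ≤ x.1 ∧ 1 ≤ x.2 ∧ x.1 + x.2 ≤ r + 1 := by
  obtain ⟨a, b⟩ := x
  simp only [coreCells, Finset.mem_filter, Finset.mem_product, Finset.mem_Icc]
  omega

def bumpDom (S : Finset Cell) (d : Dom) : Dom :=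
  if cellsD d ∩ S = ∅ then d
  else if (cellsD d ∩ S).card = 1 then
    (if d.1 ∈ S then (if d.2 then (d.1.1, d.1.2 + 1) else (d.1.1 + 1, d.1.2)) else d.1, !d.2)
  else if d.2 then ((d.1.1 + 1, d.1.2), true) else ((d.1.1, d.1.2 + 1), false)

theorem bumpLoop_cons (core : Finset Cell) (B : Tab) (j : ℕ) (d : Dom) (rest : Tab) :
    bumpLoop core B ((j, d) :: rest) =
      bumpLoop core (B ++ [(j, bumpDom (core ∪ tabCells B) d)]) rest := by
  rw [bumpLoop, bumpDom]
  split_ifs <;> rfl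

theorem bumpLoop_map_fst (core : Finset Cell) :
    ∀ B C : Tab, (bumpLoop core B C).map Prod.fst = B.map Prod.fst ++ C.map Prod.fst
  | B, [] => by simp [bumpLoop]
  | B, (j, d) :: rest => by rw [bumpLoop_cons, bumpLoop_map_fst]; simp

theorem PD_append (r : ℕ) (u u' : List ℤ) : PD r (u ++ u') = u'.foldl (dInsert r) (PD r u) :=
  List.foldl_append

theorem PD_append_singleton (r : ℕ) (u : List ℤ) (a : ℤ) : PD r (u ++ [a]) = dInsert r (PD r u) a :=
  PD_append r u [a]

theorem pairwise_dInsert (r : ℕ) {T : Tab} (hT : T.Pairwise (fun p q => p.1 < q.1)) (a : ℤ) :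
    (dInsert r T a).Pairwise (fun p q => p.1 < q.1) := by
  rw [← List.pairwise_map (f := Prod.fst) (R := (· < ·)), dInsert, bumpLoop_map_fst,
    List.map_append, List.append_assoc, List.map_singleton, List.singleton_append]
  have hsub : ∀ f : ℕ × Dom → Bool, ((T.filter f).map Prod.fst).Pairwise (· < ·) := fun f =>
    List.pairwise_map.2 (hT.sublist List.filter_sublist)
  refine List.pairwise_append.2 ⟨hsub _, List.pairwise_cons.2 ⟨?_, hsub _⟩, ?_⟩
  · simp
  · simp only [List.mem_map, List.mem_filter, decide_eq_true_eq, List.mem_cons]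
    rintro _ ⟨p, ⟨-, hp⟩, rfl⟩ _ (rfl | ⟨q, ⟨-, hq⟩, rfl⟩) <;> omega

theorem pairwise_PD (r : ℕ) (u : List ℤ) : (PD r u).Pairwise (fun p q => p.1 < q.1) := by
  induction u using List.reverseRecOn with
  | nil => exact List.Pairwise.nil
  | append_singleton u a ih => rw [PD_append_singleton]; exact pairwise_dInsert r ih a

/-! ### Transposition -/

def transposeDom (d : Dom) : Dom := (d.1.swap, !d.2)

def transposeTab (T : Tab) : Tab := T.map fun p => (p.1, transposeDom p.2)

theorem transposeTab_transposeTab (T : Tab) : transposeTab (transposeTab T) = T := by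
  simp [transposeTab, transposeDom, Function.comp_def]

theorem cellsD_transposeDom (d : Dom) :
    cellsD (transposeDom d) = (cellsD d).image Prod.swap := by
  obtain ⟨⟨x, y⟩, _ | _⟩ := d <;> simp [cellsD, transposeDom, Finset.image_insert]

theorem tabCells_transposeTab (T : Tab) :
    tabCells (transposeTab T) = (tabCells T).image Prod.swap := by
  ext x
  simp only [mem_tabCells, transposeTab, List.mem_map, Finset.mem_image]
  constructor
  · rintro ⟨_, ⟨p, hp, rfl⟩, hx⟩
    rw [cellsD_transposeDom, Finset.mem_image] at hx
    obtain ⟨y, hy, rfl⟩ := hx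
    exact ⟨y, ⟨p, hp, hy⟩, rfl⟩
  · rintro ⟨y, ⟨p, hp, hy⟩, rfl⟩
    exact ⟨_, ⟨p, hp, rfl⟩, by rw [cellsD_transposeDom]; exact Finset.mem_image_of_mem _ hy⟩

theorem coreCells_image_swap (r : ℕ) : (coreCells r).image Prod.swap = coreCells r := by
  ext ⟨x, y⟩
  simp only [Finset.mem_image, mem_coreCells, Prod.exists, Prod.swap_prod_mk, Prod.mk.injEq]
  constructor
  · rintro ⟨a, b, h, rfl, rfl⟩; omega
  · intro h; exact ⟨y, x, by omega, rfl, rfl⟩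

theorem bumpDom_transposeDom (S : Finset Cell) (d : Dom) :
    bumpDom (S.image Prod.swap) (transposeDom d) = transposeDom (bumpDom S d) := by
  have hinter : cellsD (transposeDom d) ∩ S.image Prod.swap = (cellsD d ∩ S).image Prod.swap := by
    rw [cellsD_transposeDom, Finset.image_inter _ _ Prod.swap_injective]
  have hmem : (transposeDom d).1 ∈ S.image Prod.swap ↔ d.1 ∈ S :=
    Prod.swap_injective.mem_finset_image
  simp only [bumpDom, hinter, hmem, Finset.image_eq_empty,
    Finset.card_image_of_injective _ Prod.swap_injective]
  obtain ⟨⟨x, y⟩, _ | _⟩ := d <;> simp only [transposeDom, Prod.swap_prod_mk, Bool.not_false,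
    Bool.not_true, if_true, Bool.false_eq_true, if_false] <;> split_ifs <;> rfl

theorem bumpLoop_transposeTab {core : Finset Cell} (hcore : core.image Prod.swap = core) :
    ∀ (B C : Tab), bumpLoop core (transposeTab B) (transposeTab C) =
      transposeTab (bumpLoop core B C)
  | B, [] => rfl
  | B, (j, d) :: rest => by
    have hBc : core ∪ tabCells (transposeTab B) = (core ∪ tabCells B).image Prod.swap := by
      rw [Finset.image_union, hcore, tabCells_transposeTab]
    have hC : transposeTab ((j, d) :: rest) = (j, transposeDom d) :: transposeTab rest := rfl
    rw [bumpLoop_cons, ← bumpLoop_transposeTab hcore _ rest, hC, bumpLoop_cons, hBc,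
      bumpDom_transposeDom]
    simp [transposeTab]

theorem rowEnd_image_swap (S : Finset Cell) (k : ℕ) :
    rowEnd (S.image Prod.swap) k = colEnd S k := by
  rw [rowEnd, colEnd, Finset.filter_image, Finset.card_image_of_injective _ Prod.swap_injective]
  rfl

theorem colEnd_image_swap (S : Finset Cell) (k : ℕ) :
    colEnd (S.image Prod.swap) k = rowEnd S k := by
  rw [← rowEnd_image_swap, Finset.image_image, Prod.swap_swap_eq, Finset.image_id]

theorem filter_transposeTab (T : Tab) (p : ℕ → Prop) [DecidablePred p] :
    (transposeTab T).filter (fun q => decide (p q.1)) =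
      transposeTab (T.filter fun q => decide (p q.1)) := by
  rw [transposeTab, List.filter_map]
  rfl

theorem dInsert_transposeTab (r : ℕ) (T : Tab) {a : ℤ} (ha : a ≠ 0) :
    dInsert r (transposeTab T) (-a) = transposeTab (dInsert r T a) := by
  have hBc : ∀ B : Tab, coreCells r ∪ tabCells (transposeTab B) =
      (coreCells r ∪ tabCells B).image Prod.swap := fun B => by
    rw [Finset.image_union, coreCells_image_swap, tabCells_transposeTab]
  have hB := filter_transposeTab T (· < a.natAbs)
  have hC := filter_transposeTab T (a.natAbs < ·)
  simp only [dInsert, Int.natAbs_neg, hB, hC, hBc, rowEnd_image_swap, colEnd_image_swap]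
  rw [← bumpLoop_transposeTab (coreCells_image_swap r)]
  congr
  rcases ha.lt_or_gt with ha | ha <;> simp [ha, ha.not_gt, transposeTab, transposeDom]

theorem PD_map_neg (r : ℕ) {u : List ℤ} (hu : 0 ∉ u) :
    PD r (u.map (- ·)) = transposeTab (PD r u) := by
  induction u using List.reverseRecOn with
  | nil => rfl
  | append_singleton u a ih =>
    simp only [List.mem_append, List.mem_singleton, not_or] at hu
    rw [List.map_append, List.map_singleton, PD_append_singleton, PD_append_singleton, ih hu.1]
    exact dInsert_transposeTab r _ (Ne.symm hu.2)

/-! ### The column-insertion model -/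

/-- An entry `(x, ρ, k)` of a model tableau: label `x` in row `ρ ≥ 1` and column `k ≥ 0`. -/
abbrev Entry := ℕ × ℕ × ℕ

namespace Model

def shiftPos (h : ℕ) (z : ℕ × ℕ) : ℕ × ℕ := if z.2 = h then (z.1 + 1, z.2) else z

def shiftDown (h : ℕ) (p : Entry) : Entry := (p.1, shiftPos h p.2)

def lower (i : ℕ) (c : List Entry) : List Entry := c.filter fun p => decide (p.1 < i)

def upper (i : ℕ) (c : List Entry) : List Entry := c.filter fun p => decide (i < p.1)

def insertCol (i : ℕ) (c : List Entry) : ℕ :=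
  ((lower i c).filter fun p => decide (p.2.1 = 1)).length

def insertLabel (i : ℕ) (c : List Entry) : List Entry :=
  lower i c ++ (i, 1, insertCol i c) :: (upper i c).map (shiftDown (insertCol i c))

def colHeight (c : List Entry) (k : ℕ) : ℕ := (c.filter fun p => decide (p.2.2 = k)).length

def newPos (i : ℕ) (c : List Entry) : ℕ × ℕ := (colHeight c (insertCol i c) + 1, insertCol i c)

structure IsValid (c : List Entry) : Prop where
  sorted : c.Pairwise fun p q => p.1 < q.1
  one_le_row : ∀ p ∈ c, 1 ≤ p.2.1
  eq_of_pos_eq : ∀ p ∈ c, ∀ q ∈ c, p.2 = q.2 → p = q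
  exists_above : ∀ p ∈ c, ∀ x, p.2.1 = x + 1 → 1 ≤ x → ∃ q ∈ c, q.2 = (x, p.2.2)
  exists_left : ∀ p ∈ c, ∀ k, p.2 = (1, k + 1) → ∃ q ∈ c, q.2 = (1, k)
  lt_of_col : ∀ p ∈ c, ∀ q ∈ c, p.2.2 = q.2.2 → p.2.1 < q.2.1 → p.1 < q.1
  lt_of_row_one : ∀ p ∈ c, ∀ q ∈ c, p.2.1 = 1 → q.2.1 = 1 → p.2.2 < q.2.2 → p.1 < q.1

theorem IsValid.nil : IsValid [] := by constructor <;> simp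

variable {c : List Entry} {i : ℕ}

@[simp] theorem mem_lower {p : Entry} : p ∈ lower i c ↔ p ∈ c ∧ p.1 < i := by simp [lower]

@[simp] theorem mem_upper {p : Entry} : p ∈ upper i c ↔ p ∈ c ∧ i < p.1 := by simp [upper]

theorem shiftPos_eq_or (h : ℕ) (z : ℕ × ℕ) :
    (z.2 = h ∧ shiftPos h z = (z.1 + 1, z.2)) ∨ (z.2 ≠ h ∧ shiftPos h z = z) := by
  unfold shiftPos; split_ifs with hz; exacts [Or.inl ⟨hz, rfl⟩, Or.inr ⟨hz, rfl⟩]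

@[simp] theorem shiftPos_snd (h : ℕ) (z : ℕ × ℕ) : (shiftPos h z).2 = z.2 := by
  rcases shiftPos_eq_or h z with ⟨-, hz⟩ | ⟨-, hz⟩ <;> rw [hz]

theorem shiftPos_fst (h : ℕ) (z : ℕ × ℕ) :
    (shiftPos h z).1 = if z.2 = h then z.1 + 1 else z.1 := by
  unfold shiftPos; split_ifs <;> rfl

theorem shiftPos_injective (h : ℕ) : Function.Injective (shiftPos h) := by
  intro z z' hzz'
  have hcol : z.2 = z'.2 := by simpa using congrArg Prod.snd hzz'
  rcases shiftPos_eq_or h z with ⟨hz, e⟩ | ⟨hz, e⟩ <;>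
    rcases shiftPos_eq_or h z' with ⟨hz', e'⟩ | ⟨hz', e'⟩ <;>
    rw [e, e'] at hzz' <;> simp only [Prod.ext_iff] at hzz' ⊢ <;> omega

theorem shiftPos_ne_of_one_le {h : ℕ} {z : ℕ × ℕ} (hz : 1 ≤ z.1) : shiftPos h z ≠ (1, h) := by
  rcases shiftPos_eq_or h z with ⟨hzh, e⟩ | ⟨hzh, e⟩ <;> rw [e] <;> simp [Prod.ext_iff] <;> omega

@[simp] theorem shiftDown_fst (h : ℕ) (p : Entry) : (shiftDown h p).1 = p.1 := rfl

theorem shiftDown_of_col_eq {h : ℕ} {p : Entry} (hp : p.2.2 = h) :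
    shiftDown h p = (p.1, p.2.1 + 1, p.2.2) := by simp [shiftDown, shiftPos, hp]

theorem shiftDown_of_col_ne {h : ℕ} {p : Entry} (hp : p.2.2 ≠ h) : shiftDown h p = p := by
  simp [shiftDown, shiftPos, hp]

theorem mem_insertLabel {p : Entry} : p ∈ insertLabel i c ↔
    (p ∈ c ∧ p.1 < i) ∨ p = (i, 1, insertCol i c) ∨
      ∃ q ∈ c, i < q.1 ∧ shiftDown (insertCol i c) q = p := by
  simp [insertLabel, and_assoc]

theorem IsValid.pairwise_pos_ne (hc : IsValid c) : c.Pairwise fun p q => p.2 ≠ q.2 :=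
  hc.sorted.imp_of_mem fun hp hq hlt hpq => by
    rw [hc.eq_of_pos_eq _ hp _ hq hpq] at hlt; exact lt_irrefl _ hlt

theorem IsValid.exists_of_le_row (hc : IsValid c) {p : Entry} (hp : p ∈ c) {x : ℕ} (hx1 : 1 ≤ x)
    (hx : x ≤ p.2.1) : ∃ q ∈ c, q.2 = (x, p.2.2) := by
  obtain ⟨n, hn⟩ : ∃ n, p.2.1 = x + n := ⟨p.2.1 - x, by omega⟩
  induction n generalizing p with
  | zero => exact ⟨p, hp, Prod.ext (by simp [hn]) rfl⟩
  | succ n ih =>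
    obtain ⟨q, hq, hq2⟩ := hc.exists_above p hp (x + n) (by omega) (by omega)
    obtain ⟨q', hq', hq'2⟩ := ih hq (by simp [hq2]) (by simp [hq2])
    exact ⟨q', hq', by simp [hq'2, hq2]⟩

theorem IsValid.exists_lower_row_one_iff (hc : IsValid c) (k : ℕ) :
    (∃ p ∈ lower i c, p.2 = (1, k)) ↔ k < insertCol i c := by
  set l := (lower i c).filter fun p => decide (p.2.1 = 1)
  have hmem : ∀ p : Entry, p ∈ l ↔ p ∈ c ∧ p.1 < i ∧ p.2.1 = 1 := by simp [l, and_assoc]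
  have hnd : (l.map fun p => p.2.2).Nodup := by
    refine List.Nodup.map_on (fun p hp q hq hpq => ?_) (hc.sorted.sublist
      ((List.filter_sublist).trans List.filter_sublist)).nodup
    rw [hmem] at hp hq
    exact hc.eq_of_pos_eq p hp.1 q hq.1 (Prod.ext (by omega) hpq)
  have hpred : ∀ k, k + 1 ∈ l.map (fun p => p.2.2) → k ∈ l.map fun p => p.2.2 := by
    simp only [List.mem_map]
    rintro k ⟨p, hp, hk⟩
    rw [hmem] at hp
    obtain ⟨q, hq, hq2⟩ := hc.exists_left p hp.1 k (Prod.ext hp.2.2 hk)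
    have := hc.lt_of_row_one q hq p hp.1 (by simp [hq2]) hp.2.2 (by simp [hq2]; omega)
    exact ⟨q, (hmem q).2 ⟨hq, by omega, by simp [hq2]⟩, by simp [hq2]⟩
  rw [insertCol, ← List.length_map (f := fun p : Entry => p.2.2),
    ← List.mem_iff_lt_length_of_pred_mem hnd hpred]
  simp only [List.mem_map, hmem, mem_lower]
  constructor
  · rintro ⟨p, ⟨hp, hpi⟩, hpk⟩
    exact ⟨p, ⟨hp, hpi, by simp [hpk]⟩, by simp [hpk]⟩
  · rintro ⟨p, ⟨hp, hpi, hp1⟩, hpk⟩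
    exact ⟨p, ⟨hp, hpi⟩, Prod.ext hp1 hpk⟩

theorem IsValid.lt_of_col_eq_insertCol (hc : IsValid c) (hfresh : ∀ p ∈ c, p.1 ≠ i) {p : Entry}
    (hp : p ∈ c) (hcol : p.2.2 = insertCol i c) : i < p.1 := by
  obtain ⟨q, hq, hq2⟩ := hc.exists_of_le_row hp le_rfl (hc.one_le_row p hp)
  have hqi : i < q.1 := by
    refine lt_of_le_of_ne (not_lt.1 fun hlt => ?_) (hfresh q hq).symm
    have := (hc.exists_lower_row_one_iff (insertCol i c)).1 ⟨q, mem_lower.2 ⟨hq, hlt⟩, by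
      simp [hq2, hcol]⟩
    exact lt_irrefl _ this
  rcases (hc.one_le_row p hp).lt_or_eq with h | h
  · exact hqi.trans (hc.lt_of_col q hq p hp (by simp [hq2]) (by simp [hq2, h]))
  · rwa [← hc.eq_of_pos_eq q hq p hp (by simp [hq2, h])]

theorem IsValid.exists_pos_iff_le_colHeight (hc : IsValid c) (k x : ℕ) :
    (∃ p ∈ c, p.2 = (x, k)) ↔ 1 ≤ x ∧ x ≤ colHeight c k := by
  set l := c.filter fun p => decide (p.2.2 = k)
  have hmem : ∀ p : Entry, p ∈ l ↔ p ∈ c ∧ p.2.2 = k := by simp [l]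
  have hnd : (l.map fun p => p.2.1 - 1).Nodup := by
    refine List.Nodup.map_on (fun p hp q hq hpq => ?_) (hc.sorted.sublist List.filter_sublist).nodup
    rw [hmem] at hp hq
    have := hc.one_le_row p hp.1
    have := hc.one_le_row q hq.1
    exact hc.eq_of_pos_eq p hp.1 q hq.1 (Prod.ext (by omega) (by omega))
  have hpred : ∀ x, x + 1 ∈ l.map (fun p => p.2.1 - 1) → x ∈ l.map fun p => p.2.1 - 1 := by
    simp only [List.mem_map]
    rintro x ⟨p, hp, hx⟩
    rw [hmem] at hp
    obtain ⟨q, hq, hq2⟩ := hc.exists_above p hp.1 (x + 1) (by omega) (by omega)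
    exact ⟨q, (hmem q).2 ⟨hq, by simp [hq2, hp.2]⟩, by simp [hq2]⟩
  have key := List.mem_iff_lt_length_of_pred_mem hnd hpred (x - 1)
  rw [List.length_map, show l.length = colHeight c k from rfl] at key
  simp only [List.mem_map, hmem] at key
  constructor
  · rintro ⟨p, hp, hpx⟩
    have := hc.one_le_row p hp
    have := key.1 ⟨p, ⟨hp, by simp [hpx]⟩, by simp [hpx]⟩
    simp only [hpx] at *
    omega
  · rintro ⟨hx1, hx⟩
    obtain ⟨p, ⟨hp, hpk⟩, hpx⟩ := key.2 (by omega)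
    have := hc.one_le_row p hp
    exact ⟨p, hp, Prod.ext (by omega) hpk⟩

/-- Which entries of `upper i c` find their position taken when they are bumped back in, in
increasing order. -/
theorem IsValid.occupied_iff (hc : IsValid c) (hfresh : ∀ p ∈ c, p.1 ≠ i) {C₁ C₂ : List Entry}
    {e : Entry} (hsplit : upper i c = C₁ ++ e :: C₂) :
    (∃ q ∈ (lower i c ++ [(i, 1, insertCol i c)]) ++ C₁.map (shiftDown (insertCol i c)),
      q.2 = e.2) ↔ e.2.2 = insertCol i c := by
  have hsorted : (C₁ ++ e :: C₂).Pairwise fun p q : Entry => p.1 < q.1 :=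
    hsplit ▸ hc.sorted.sublist List.filter_sublist
  have hmemC : ∀ q, q ∈ C₁ ++ e :: C₂ ↔ q ∈ c ∧ i < q.1 := fun q => by rw [← hsplit, mem_upper]
  have he := (hmemC e).1 (by simp)
  have hC₁ : ∀ q ∈ C₁, q.1 < e.1 := fun q hq =>
    (List.pairwise_append.1 hsorted).2.2 q hq e (by simp)
  have hC₂ : ∀ q ∈ C₂, e.1 < q.1 := (List.pairwise_cons.1 (List.pairwise_append.1 hsorted).2.1).1
  constructor
  · rintro ⟨q, hq, hqe⟩
    simp only [List.mem_append, List.mem_singleton, List.mem_map, mem_lower] at hq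
    rcases hq with (⟨hq, hqi⟩ | rfl) | ⟨q, hq, rfl⟩
    · rw [hc.eq_of_pos_eq q hq e he.1 hqe] at hqi
      omega
    · exact (congrArg Prod.snd hqe).symm
    · by_cases hcol : q.2.2 = insertCol i c
      · rw [← hcol, ← hqe]; simp [shiftDown]
      · rw [shiftDown_of_col_ne hcol] at hqe
        have := hC₁ q hq
        rw [hc.eq_of_pos_eq q ((hmemC q).1 (by simp [hq])).1 e he.1 hqe] at this
        omega
  · intro hcol
    rcases (hc.one_le_row e he.1).lt_or_eq with hrow | hrow
    · obtain ⟨q, hq, hq2⟩ := hc.exists_above e he.1 (e.2.1 - 1) (by omega) (by omega)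
      have hqcol : q.2.2 = insertCol i c := by simp [hq2, hcol]
      have hqe : q.1 < e.1 := hc.lt_of_col q hq e he.1 (by simp [hq2]) (by simp [hq2]; omega)
      have hqC : q ∈ C₁ := by
        have := (hmemC q).2 ⟨hq, hc.lt_of_col_eq_insertCol hfresh hq hqcol⟩
        simp only [List.mem_append, List.mem_cons] at this
        rcases this with h | rfl | h
        exacts [h, absurd hqe (lt_irrefl _), absurd (hC₂ q h) (by omega)]
      refine ⟨shiftDown (insertCol i c) q, List.mem_append_right _ (List.mem_map_of_mem hqC), ?_⟩
      rw [shiftDown_of_col_eq hqcol, hq2]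
      exact Prod.ext (by simp; omega) rfl
    · exact ⟨(i, 1, insertCol i c), by simp, Prod.ext hrow hcol.symm⟩

/-- The lower entries avoid the insertion column, so `shiftDown` may be applied to all of `c`. -/
theorem IsValid.mem_insertLabel_iff (hc : IsValid c) (hfresh : ∀ p ∈ c, p.1 ≠ i) {p : Entry} :
    p ∈ insertLabel i c ↔
      p = (i, 1, insertCol i c) ∨ ∃ q ∈ c, shiftDown (insertCol i c) q = p := by
  rw [mem_insertLabel]
  constructor
  · rintro (⟨hp, hpi⟩ | hp | ⟨q, hq, -, rfl⟩)
    · refine Or.inr ⟨p, hp, shiftDown_of_col_ne fun hcol => ?_⟩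
      exact absurd (hc.lt_of_col_eq_insertCol hfresh hp hcol) (by omega)
    exacts [Or.inl hp, Or.inr ⟨q, hq, rfl⟩]
  · rintro (hp | ⟨q, hq, rfl⟩)
    · exact Or.inr (Or.inl hp)
    rcases lt_or_gt_of_ne (hfresh q hq) with hqi | hqi
    · have hcol : q.2.2 ≠ insertCol i c := fun hcol =>
        absurd (hc.lt_of_col_eq_insertCol hfresh hq hcol) (by omega)
      exact Or.inl (by rw [shiftDown_of_col_ne hcol]; exact ⟨hq, hqi⟩)
    · exact Or.inr (Or.inr ⟨q, hq, hqi, rfl⟩)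

theorem IsValid.lt_iff_col_lt_of_row_one (hc : IsValid c) {p : Entry}
    (hp : p ∈ c) (hrow : p.2.1 = 1) : p.1 < i ↔ p.2.2 < insertCol i c := by
  rw [← hc.exists_lower_row_one_iff]
  constructor
  · exact fun hpi => ⟨p, mem_lower.2 ⟨hp, hpi⟩, Prod.ext hrow rfl⟩
  · rintro ⟨q, hq, hqp⟩
    rw [mem_lower] at hq
    exact hc.eq_of_pos_eq q hq.1 p hp (hqp.trans (Prod.ext hrow.symm rfl)) ▸ hq.2

theorem IsValid.sorted_insertLabel (hc : IsValid c) :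
    (insertLabel i c).Pairwise fun p q => p.1 < q.1 := by
  refine List.pairwise_append.2 ⟨hc.sorted.sublist List.filter_sublist, ?_, ?_⟩
  · refine List.pairwise_cons.2 ⟨?_, List.pairwise_map.2 ?_⟩
    · simp only [List.mem_map, mem_upper]
      rintro _ ⟨q, ⟨-, hq⟩, rfl⟩
      exact hq
    · exact hc.sorted.sublist List.filter_sublist
  · simp only [mem_lower, List.mem_cons, List.mem_map, mem_upper]
    rintro p ⟨-, hpi⟩ _ (rfl | ⟨q, ⟨-, hqi⟩, rfl⟩) <;> simp only [shiftDown_fst] <;> omega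

theorem IsValid.exists_above_insertLabel (hc : IsValid c) (hfresh : ∀ p ∈ c, p.1 ≠ i) :
    ∀ p ∈ insertLabel i c, ∀ x, p.2.1 = x + 1 → 1 ≤ x →
      ∃ q ∈ insertLabel i c, q.2 = (x, p.2.2) := by
  simp only [hc.mem_insertLabel_iff hfresh]
  rintro _ (rfl | ⟨p, hp, rfl⟩) x hx hx1
  · simp at hx; omega
  by_cases hcol : p.2.2 = insertCol i c
  · rw [shiftDown_of_col_eq hcol] at hx ⊢
    simp only [Nat.add_right_cancel_iff] at hx ⊢
    rcases hx1.eq_or_lt with rfl | hx1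
    · exact ⟨_, Or.inl rfl, by simp [hcol]⟩
    obtain ⟨q, hq, hq2⟩ := hc.exists_above p hp (x - 1) (by omega) (by omega)
    refine ⟨_, Or.inr ⟨q, hq, rfl⟩, ?_⟩
    rw [shiftDown_of_col_eq (by simp [hq2, hcol]), hq2]
    ext <;> simp; omega
  · rw [shiftDown_of_col_ne hcol] at hx ⊢
    obtain ⟨q, hq, hq2⟩ := hc.exists_above p hp x hx hx1
    refine ⟨_, Or.inr ⟨q, hq, rfl⟩, ?_⟩
    rwa [shiftDown_of_col_ne (by simp [hq2, hcol])]

theorem IsValid.exists_left_insertLabel (hc : IsValid c) (hfresh : ∀ p ∈ c, p.1 ≠ i) :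
    ∀ p ∈ insertLabel i c, ∀ k, p.2 = (1, k + 1) → ∃ q ∈ insertLabel i c, q.2 = (1, k) := by
  have hstay : ∀ q ∈ c, ∀ k, q.2 = (1, k) → k ≠ insertCol i c →
      ∃ q' ∈ insertLabel i c, q'.2 = (1, k) := fun q hq k hq2 hk =>
    ⟨q, (hc.mem_insertLabel_iff hfresh).2 (Or.inr ⟨q, hq, shiftDown_of_col_ne (by simp [hq2, hk])⟩),
      hq2⟩
  rintro _ hp' k hk
  rcases (hc.mem_insertLabel_iff hfresh).1 hp' with rfl | ⟨p, hp, rfl⟩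
  · simp only [Prod.mk.injEq, true_and] at hk
    obtain ⟨q, hq, hq2⟩ := (hc.exists_lower_row_one_iff (i := i) k).2 (by omega)
    exact hstay q (mem_lower.1 hq).1 k hq2 (by omega)
  have hcol : p.2.2 ≠ insertCol i c := fun hcol => by
    rw [shiftDown_of_col_eq hcol] at hk
    simp only [Prod.mk.injEq] at hk
    exact absurd hk.1 (by have := hc.one_le_row p hp; omega)
  rw [shiftDown_of_col_ne hcol] at hk
  obtain ⟨q, hq, hq2⟩ := hc.exists_left p hp k hk
  by_cases hkh : k = insertCol i c
  · exact ⟨_, (hc.mem_insertLabel_iff hfresh).2 (Or.inl rfl), by simp [hkh]⟩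
  · exact hstay q hq k hq2 hkh

theorem IsValid.lt_of_col_insertLabel (hc : IsValid c) (hfresh : ∀ p ∈ c, p.1 ≠ i) :
    ∀ p ∈ insertLabel i c, ∀ q ∈ insertLabel i c, p.2.2 = q.2.2 → p.2.1 < q.2.1 → p.1 < q.1 := by
  simp only [hc.mem_insertLabel_iff hfresh]
  rintro _ (rfl | ⟨p, hp, rfl⟩) _ (rfl | ⟨q, hq, rfl⟩) hcol hrow
  · exact absurd hrow (lt_irrefl _)
  · exact show i < q.1 from
      hc.lt_of_col_eq_insertCol hfresh hq (by simpa [shiftDown] using hcol.symm)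
  · have := hc.one_le_row p hp
    simp only [shiftDown, shiftPos_fst] at hrow
    split_ifs at hrow <;> omega
  · simp only [shiftDown, shiftPos_snd, shiftPos_fst] at hcol hrow ⊢
    refine hc.lt_of_col p hp q hq hcol ?_
    split_ifs at hrow <;> omega

theorem IsValid.lt_of_row_one_insertLabel (hc : IsValid c) (hfresh : ∀ p ∈ c, p.1 ≠ i) :
    ∀ p ∈ insertLabel i c, ∀ q ∈ insertLabel i c, p.2.1 = 1 → q.2.1 = 1 → p.2.2 < q.2.2 →
      p.1 < q.1 := by
  have hrow1 : ∀ p ∈ c, (shiftDown (insertCol i c) p).2.1 = 1 →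
      p.2.1 = 1 ∧ p.2.2 ≠ insertCol i c ∧ shiftDown (insertCol i c) p = p := fun p hp h1 => by
    have := hc.one_le_row p hp
    by_cases hcol : p.2.2 = insertCol i c
    · rw [shiftDown_of_col_eq hcol] at h1; simp only at h1; omega
    · rw [shiftDown_of_col_ne hcol] at h1 ⊢; exact ⟨h1, hcol, rfl⟩
  simp only [hc.mem_insertLabel_iff hfresh]
  rintro _ (rfl | ⟨p, hp, rfl⟩) _ (rfl | ⟨q, hq, rfl⟩) hp1 hq1 hcol
  · exact absurd hcol (lt_irrefl _)
  · obtain ⟨hq1, hqh, e⟩ := hrow1 q hq hq1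
    rw [e] at hcol ⊢
    have := (hc.lt_iff_col_lt_of_row_one (i := i) hq hq1).not.2 (by simp at hcol; omega)
    have := hfresh q hq
    simp only; omega
  · obtain ⟨hp1, hph, e⟩ := hrow1 p hp hp1
    rw [e] at hcol ⊢
    exact (hc.lt_iff_col_lt_of_row_one hp hp1).2 hcol
  · obtain ⟨hp1, -, e⟩ := hrow1 p hp hp1
    obtain ⟨hq1, -, e'⟩ := hrow1 q hq hq1
    rw [e, e'] at hcol ⊢
    exact hc.lt_of_row_one p hp q hq hp1 hq1 hcol

theorem isValid_insertLabel (hc : IsValid c) (hfresh : ∀ p ∈ c, p.1 ≠ i) :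
    IsValid (insertLabel i c) where
  sorted := hc.sorted_insertLabel
  one_le_row := by
    simp only [hc.mem_insertLabel_iff hfresh]
    rintro _ (rfl | ⟨q, hq, rfl⟩)
    · exact le_rfl
    · have := hc.one_le_row q hq
      simp only [shiftDown, shiftPos_fst]
      split_ifs <;> omega
  eq_of_pos_eq := by
    simp only [hc.mem_insertLabel_iff hfresh]
    rintro _ (rfl | ⟨p, hp, rfl⟩) _ (rfl | ⟨q, hq, rfl⟩) hpq
    · rfl
    · exact absurd hpq.symm (shiftPos_ne_of_one_le (hc.one_le_row q hq))
    · exact absurd hpq (shiftPos_ne_of_one_le (hc.one_le_row p hp))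
    · rw [hc.eq_of_pos_eq p hp q hq (shiftPos_injective _ hpq)]
  exists_above := hc.exists_above_insertLabel hfresh
  exists_left := hc.exists_left_insertLabel hfresh
  lt_of_col := hc.lt_of_col_insertLabel hfresh
  lt_of_row_one := hc.lt_of_row_one_insertLabel hfresh

theorem lower_append_upper (hs : c.Pairwise fun p q => p.1 < q.1) (hfresh : ∀ p ∈ c, p.1 ≠ i) :
    lower i c ++ upper i c = c := by
  induction c with
  | nil => rfl
  | cons p c ih =>
    obtain ⟨hp, hs⟩ := List.pairwise_cons.1 hs
    have hpi := hfresh p (by simp)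
    rcases lt_or_gt_of_ne hpi with hpi | hpi
    · simp only [lower, upper, List.filter_cons, hpi, decide_true, if_true, (lt_asymm hpi),
        decide_false, Bool.false_eq_true, if_false, List.cons_append]
      exact congrArg _ (ih hs fun q hq => hfresh q (by simp [hq]))
    · have hlow : lower i c = [] := List.filter_eq_nil_iff.2 fun q hq => by
        have := hp q hq; simp; omega
      have hup : upper i c = c := List.filter_eq_self.2 fun q hq => by
        have := hp q hq; simp; omega
      simp only [lower, upper, List.filter_cons, hpi, (lt_asymm hpi), decide_true, if_true,
        decide_false, Bool.false_eq_true, if_false] at hlow hup ⊢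
      rw [hlow, hup]; rfl

theorem IsValid.colHeight_insertLabel (hc : IsValid c) (hfresh : ∀ p ∈ c, p.1 ≠ i) (k : ℕ) :
    colHeight (insertLabel i c) k = colHeight c k + if k = insertCol i c then 1 else 0 := by
  have hsplit : colHeight c k = colHeight (lower i c) k + colHeight (upper i c) k := by
    rw [colHeight, colHeight, colHeight, ← List.length_append, ← List.filter_append,
      lower_append_upper hc.sorted hfresh]
  have hshift : ∀ p : Entry, (shiftDown (insertCol i c) p).2.2 = p.2.2 := fun p => by
    simp [shiftDown]
  rw [hsplit, colHeight, insertLabel, List.filter_append, List.filter_cons, List.filter_map]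
  simp only [Function.comp_def, hshift]
  split_ifs <;> simp_all [colHeight]; omega

theorem IsValid.exists_pos_insertLabel_iff (hc : IsValid c) (hfresh : ∀ p ∈ c, p.1 ≠ i)
    (z : ℕ × ℕ) : (∃ p ∈ insertLabel i c, p.2 = z) ↔ (∃ p ∈ c, p.2 = z) ∨ z = newPos i c := by
  obtain ⟨x, k⟩ := z
  rw [(isValid_insertLabel hc hfresh).exists_pos_iff_le_colHeight, hc.exists_pos_iff_le_colHeight,
    hc.colHeight_insertLabel hfresh, newPos]
  split_ifs with hk
  · subst hk; simp only [Prod.mk.injEq, and_true]; omega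
  · simp only [Prod.mk.injEq]; omega

theorem IsValid.newPos_not_mem (hc : IsValid c) : ¬∃ p ∈ c, p.2 = newPos i c := by
  rw [newPos, hc.exists_pos_iff_le_colHeight]
  omega

theorem row_le_of_mem_insertLabel {t : ℕ} (hc : ∀ p ∈ c, p.2.1 ≤ t) :
    ∀ p ∈ insertLabel i c, p.2.1 ≤ t + 1 := by
  simp only [mem_insertLabel]
  rintro p (⟨hp, -⟩ | rfl | ⟨q, hq, -, rfl⟩)
  · exact (hc p hp).trans (Nat.le_succ t)
  · simp
  · have := hc q hq
    simp only [shiftDown, shiftPos_fst]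
    split_ifs <;> omega

theorem label_mem_of_mem_insertLabel {p : Entry} (hp : p ∈ insertLabel i c) :
    p.1 = i ∨ p.1 ∈ c.map Prod.fst := by
  rw [mem_insertLabel] at hp
  rcases hp with ⟨hp, -⟩ | rfl | ⟨q, hq, -, rfl⟩
  · exact Or.inr (List.mem_map_of_mem hp)
  · exact Or.inl rfl
  · exact Or.inr (List.mem_map_of_mem (f := Prod.fst) hq :)

def ofList (l : List ℕ) : List Entry := l.foldl (fun c j => insertLabel j c) []

theorem ofList_append_singleton (l : List ℕ) (j : ℕ) :
    ofList (l ++ [j]) = insertLabel j (ofList l) :=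
  List.foldl_append ..

theorem label_mem_of_mem_ofList {l : List ℕ} {p : Entry} (hp : p ∈ ofList l) : p.1 ∈ l := by
  induction l using List.reverseRecOn generalizing p with
  | nil => simp [ofList] at hp
  | append_singleton l j ih =>
    rw [ofList_append_singleton] at hp
    rcases label_mem_of_mem_insertLabel hp with h | h
    · simp [h]
    · obtain ⟨q, hq, e⟩ := List.mem_map.1 h
      simp [← e, ih hq]

theorem row_le_length_of_mem_ofList {l : List ℕ} : ∀ p ∈ ofList l, p.2.1 ≤ l.length := by
  induction l using List.reverseRecOn with
  | nil => simp [ofList]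
  | append_singleton l j ih =>
    rw [ofList_append_singleton, List.length_append, List.length_singleton]
    exact row_le_of_mem_insertLabel ih

theorem isValid_ofList {l : List ℕ} (hl : l.Nodup) : IsValid (ofList l) := by
  induction l using List.reverseRecOn with
  | nil => exact IsValid.nil
  | append_singleton l j ih =>
    rw [List.nodup_append] at hl
    rw [ofList_append_singleton]
    exact isValid_insertLabel (ih hl.1) fun p hp hpj =>
      hl.2.2 _ (label_mem_of_mem_ofList hp) j (by simp) hpj

end Model

open Model

/-! ### Domino tableaux built from two models -/

inductive Shuffle {α β : Type*} (f g : α → β) : List β → List α → List α → Prop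
  | nil : Shuffle f g [] [] []
  | consLeft {L A S} (a : α) : Shuffle f g L A S → Shuffle f g (f a :: L) (a :: A) S
  | consRight {L A S} (s : α) : Shuffle f g L A S → Shuffle f g (g s :: L) A (s :: S)

namespace Shuffle

variable {α β : Type*} {f g : α → β} {A S : List α}

theorem perm {L : List β} (h : Shuffle f g L A S) : L.Perm (A.map f ++ S.map g) := by
  induction h with
  | nil => rfl
  | consLeft a _ ih => exact ih.cons (f a)
  | consRight s _ ih => exact (ih.cons (g s)).trans (by simpa using List.perm_middle.symm)

theorem append {L L' : List β} {A' S' : List α} (h : Shuffle f g L A S)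
    (h' : Shuffle f g L' A' S') : Shuffle f g (L ++ L') (A ++ A') (S ++ S') := by
  induction h with
  | nil => exact h'
  | consLeft a _ ih => exact ih.consLeft a
  | consRight s _ ih => exact ih.consRight s

theorem map {γ : Type*} (φ : β → γ) {L : List β} (h : Shuffle f g L A S) :
    Shuffle (φ ∘ f) (φ ∘ g) (L.map φ) A S := by
  induction h with
  | nil => exact nil
  | consLeft a _ ih => exact ih.consLeft a
  | consRight s _ ih => exact ih.consRight s

theorem swap {L : List β} (h : Shuffle f g L A S) : Shuffle g f L S A := by
  induction h with
  | nil => exact nil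
  | consLeft a _ ih => exact ih.consRight a
  | consRight s _ ih => exact ih.consLeft s

theorem filter (P : β → Bool) {L : List β} (h : Shuffle f g L A S) :
    Shuffle f g (L.filter P) (A.filter (P ∘ f)) (S.filter (P ∘ g)) := by
  induction h with
  | nil => exact nil
  | consLeft a _ ih =>
    by_cases hP : P (f a) <;> simp only [List.filter_cons, Function.comp_apply, hP] <;> simp
    · exact ih.consLeft a
    · exact ih
  | consRight s _ ih =>
    by_cases hP : P (g s) <;> simp only [List.filter_cons, Function.comp_apply, hP] <;> simp
    · exact ih.consRight s
    · exact ih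

end Shuffle

/-- Position `(ρ, k)` of a model is the horizontal domino in row `ρ` on columns `r + 1 + 2k` and
`r + 2 + 2k`, to the right of the core; `vDom` is its transpose, below the core. -/
def hDom (r : ℕ) (z : ℕ × ℕ) : Dom := ((z.1, r + 1 + 2 * z.2), true)

def vDom (r : ℕ) (z : ℕ × ℕ) : Dom := ((r + 1 + 2 * z.2, z.1), false)

def embed (fd : ℕ × ℕ → Dom) (p : Entry) : ℕ × Dom := (p.1, fd p.2)

theorem mem_cellsD_hDom {r : ℕ} {z : ℕ × ℕ} {x : Cell} :
    x ∈ cellsD (hDom r z) ↔ x.1 = z.1 ∧ (x.2 = r + 1 + 2 * z.2 ∨ x.2 = r + 2 + 2 * z.2) := by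
  obtain ⟨x1, x2⟩ := x
  simp [cellsD, hDom, Prod.ext_iff]
  omega

theorem mem_cellsD_vDom {r : ℕ} {z : ℕ × ℕ} {x : Cell} :
    x ∈ cellsD (vDom r z) ↔ x.2 = z.1 ∧ (x.1 = r + 1 + 2 * z.2 ∨ x.1 = r + 2 + 2 * z.2) := by
  obtain ⟨x1, x2⟩ := x
  simp [cellsD, vDom, Prod.ext_iff]
  omega

theorem disjoint_hDom {r : ℕ} {z z' : ℕ × ℕ} (h : z ≠ z') :
    Disjoint (cellsD (hDom r z)) (cellsD (hDom r z')) :=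
  Finset.disjoint_left.2 fun x hx hx' => by
    rw [mem_cellsD_hDom] at hx hx'
    exact h (Prod.ext (by omega) (by omega))

theorem disjoint_vDom {r : ℕ} {z z' : ℕ × ℕ} (h : z ≠ z') :
    Disjoint (cellsD (vDom r z)) (cellsD (vDom r z')) :=
  Finset.disjoint_left.2 fun x hx hx' => by
    rw [mem_cellsD_vDom] at hx hx'
    exact h (Prod.ext (by omega) (by omega))

theorem disjoint_hDom_vDom {r : ℕ} {z z' : ℕ × ℕ} (h : z'.1 ≤ r) :
    Disjoint (cellsD (hDom r z)) (cellsD (vDom r z')) :=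
  Finset.disjoint_left.2 fun x hx hx' => by
    rw [mem_cellsD_hDom] at hx
    rw [mem_cellsD_vDom] at hx'
    omega

theorem disjoint_hDom_coreCells {r : ℕ} {z : ℕ × ℕ} :
    Disjoint (cellsD (hDom r z)) (coreCells r) :=
  Finset.disjoint_left.2 fun x hx hx' => by
    rw [mem_cellsD_hDom] at hx
    rw [mem_coreCells] at hx'
    omega

theorem disjoint_vDom_coreCells {r : ℕ} {z : ℕ × ℕ} :
    Disjoint (cellsD (vDom r z)) (coreCells r) :=
  Finset.disjoint_left.2 fun x hx hx' => by
    rw [mem_cellsD_vDom] at hx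
    rw [mem_coreCells] at hx'
    omega

theorem transposeTab_embed_hDom (r : ℕ) :
    (fun p : ℕ × Dom => (p.1, transposeDom p.2)) ∘ embed (hDom r) = embed (vDom r) := rfl

theorem transposeTab_embed_vDom (r : ℕ) :
    (fun p : ℕ × Dom => (p.1, transposeDom p.2)) ∘ embed (vDom r) = embed (hDom r) := by
  funext p; simp [embed, vDom, hDom, transposeDom]

theorem Shuffle.transposeTab {r : ℕ} {T : Tab} {A S : List Entry}
    (h : Shuffle (embed (hDom r)) (embed (vDom r)) T A S) :
    Shuffle (embed (hDom r)) (embed (vDom r)) (transposeTab T) S A := by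
  have := (h.map fun p : ℕ × Dom => (p.1, transposeDom p.2)).swap
  rwa [transposeTab_embed_hDom, transposeTab_embed_vDom] at this

theorem mem_tabCells_of_perm {fd gd : ℕ × ℕ → Dom} {B : Tab} {A S : List Entry}
    (hB : B.Perm (A.map (embed fd) ++ S.map (embed gd))) {x : Cell} :
    x ∈ tabCells B ↔ (∃ p ∈ A, x ∈ cellsD (fd p.2)) ∨ (∃ s ∈ S, x ∈ cellsD (gd s.2)) := by
  simp only [mem_tabCells, hB.mem_iff, List.mem_append, List.mem_map]
  constructor
  · rintro ⟨_, ⟨p, hp, rfl⟩ | ⟨p, hp, rfl⟩, hx⟩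
    exacts [Or.inl ⟨p, hp, hx⟩, Or.inr ⟨p, hp, hx⟩]
  · rintro (⟨p, hp, hx⟩ | ⟨p, hp, hx⟩)
    exacts [⟨_, Or.inl ⟨p, hp, rfl⟩, hx⟩, ⟨_, Or.inr ⟨p, hp, rfl⟩, hx⟩]

theorem disjoint_tabCells_of_perm {fd gd : ℕ × ℕ → Dom} {B : Tab} {A S : List Entry}
    (hB : B.Perm (A.map (embed fd) ++ S.map (embed gd))) {X : Finset Cell}
    (hA : ∀ p ∈ A, Disjoint X (cellsD (fd p.2))) (hS : ∀ s ∈ S, Disjoint X (cellsD (gd s.2))) :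
    Disjoint X (tabCells B) := by
  refine Finset.disjoint_left.2 fun x hx hxB => ?_
  rcases (mem_tabCells_of_perm hB).1 hxB with ⟨p, hp, hxp⟩ | ⟨s, hs, hxs⟩
  exacts [Finset.disjoint_left.1 (hA p hp) hx hxp, Finset.disjoint_left.1 (hS s hs) hx hxs]

theorem exists_mem_cellsD_iff {fd : ℕ × ℕ → Dom} {A A' : List Entry} {z₀ : ℕ × ℕ}
    (h : ∀ z, (∃ p ∈ A', p.2 = z) ↔ (∃ p ∈ A, p.2 = z) ∨ z = z₀) (x : Cell) :
    (∃ p ∈ A', x ∈ cellsD (fd p.2)) ↔ (∃ p ∈ A, x ∈ cellsD (fd p.2)) ∨ x ∈ cellsD (fd z₀) := by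
  constructor
  · rintro ⟨p, hp, hx⟩
    rcases (h p.2).1 ⟨p, hp, rfl⟩ with ⟨q, hq, e⟩ | e
    exacts [Or.inl ⟨q, hq, e ▸ hx⟩, Or.inr (e ▸ hx)]
  · rintro (⟨p, hp, hx⟩ | hx)
    · obtain ⟨q, hq, e⟩ := (h p.2).2 (Or.inl ⟨p, hp, rfl⟩)
      exact ⟨q, hq, e ▸ hx⟩
    · obtain ⟨q, hq, e⟩ := (h z₀).2 (Or.inr rfl)
      exact ⟨q, hq, e ▸ hx⟩

theorem bumpDom_of_disjoint {S : Finset Cell} {d : Dom} (h : Disjoint (cellsD d) S) :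
    bumpDom S d = d := by
  rw [bumpDom, if_pos (Finset.disjoint_iff_inter_eq_empty.1 h)]

theorem bumpDom_hDom_of_subset {S : Finset Cell} {r : ℕ} {z : ℕ × ℕ}
    (h : cellsD (hDom r z) ⊆ S) : bumpDom S (hDom r z) = hDom r (z.1 + 1, z.2) := by
  have hcard : (cellsD (hDom r z)).card = 2 := Finset.card_pair (by simp [hDom])
  rw [bumpDom, Finset.inter_eq_left.2 h, if_neg, if_neg] <;> [rfl; omega; skip]
  rw [← Finset.card_eq_zero]; omega

theorem bumpDom_hDom {r h : ℕ} {B : Tab} {Bh vb : List Entry}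
    (hB : B.Perm (Bh.map (embed (hDom r)) ++ vb.map (embed (vDom r))))
    (hvb : ∀ s ∈ vb, s.2.1 ≤ r) {a : Entry} (hocc : (∃ q ∈ Bh, q.2 = a.2) ↔ a.2.2 = h) :
    bumpDom (coreCells r ∪ tabCells B) (hDom r a.2) = hDom r (shiftDown h a).2 := by
  by_cases hcol : a.2.2 = h
  · obtain ⟨q, hq, hqa⟩ := hocc.2 hcol
    rw [shiftDown_of_col_eq hcol, bumpDom_hDom_of_subset]
    refine fun x hx => Finset.mem_union_right _ ((mem_tabCells_of_perm hB).2 (Or.inl ?_))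
    exact ⟨q, hq, hqa ▸ hx⟩
  · rw [shiftDown_of_col_ne hcol, bumpDom_of_disjoint]
    refine Finset.disjoint_union_right.2 ⟨disjoint_hDom_coreCells, ?_⟩
    refine disjoint_tabCells_of_perm hB (fun q hq => disjoint_hDom fun e => ?_)
      fun s hs => disjoint_hDom_vDom (hvb s hs)
    exact hcol (hocc.1 ⟨q, hq, e.symm⟩)

theorem bumpDom_vDom {r : ℕ} {B : Tab} {Bh vb : List Entry}
    (hB : B.Perm (Bh.map (embed (hDom r)) ++ vb.map (embed (vDom r)))) {s : Entry}
    (hs : s.2.1 ≤ r) (hvb : ∀ s' ∈ vb, s'.2 ≠ s.2) :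
    bumpDom (coreCells r ∪ tabCells B) (vDom r s.2) = vDom r s.2 := by
  refine bumpDom_of_disjoint (Finset.disjoint_union_right.2 ⟨disjoint_vDom_coreCells, ?_⟩)
  exact disjoint_tabCells_of_perm hB (fun q _ => (disjoint_hDom_vDom hs).symm)
    fun s' hs' => disjoint_vDom fun e => hvb s' hs' e.symm

theorem perm_append_singleton_of_perm {B : Tab} {X Y : List (ℕ × Dom)} (hB : B.Perm (X ++ Y))
    (x : ℕ × Dom) : (B ++ [x]).Perm (X ++ x :: Y) :=
  (hB.append_right _).trans (by
    rw [List.append_assoc]; exact (List.perm_append_singleton _ _).append_left _)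

theorem bumpLoop_shuffle {r h : ℕ} {C : Tab} {Crem vrem : List Entry}
    (hC : Shuffle (embed (hDom r)) (embed (vDom r)) C Crem vrem) :
    ∀ (B : Tab) (Bh vb : List Entry),
      B.Perm (Bh.map (embed (hDom r)) ++ vb.map (embed (vDom r))) →
      (∀ s ∈ vb ++ vrem, s.2.1 ≤ r) → (vb ++ vrem).Pairwise (fun s s' => s.2 ≠ s'.2) →
      (∀ C₁ e C₂, Crem = C₁ ++ e :: C₂ → ((∃ q ∈ Bh ++ C₁.map (shiftDown h), q.2 = e.2) ↔
        e.2.2 = h)) →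
      ∃ C', bumpLoop (coreCells r) B C = B ++ C' ∧
        Shuffle (embed (hDom r)) (embed (vDom r)) C' (Crem.map (shiftDown h)) vrem := by
  induction hC with
  | nil => exact fun B _ _ _ _ _ _ => ⟨[], by simp [bumpLoop], Shuffle.nil⟩
  | @consLeft L A S a _ ih =>
    intro B Bh vb hB hrows hpair hocc
    have hstep := bumpDom_hDom hB (fun s hs => hrows s (List.mem_append_left _ hs))
      (by simpa using hocc [] a A rfl)
    obtain ⟨C', hC', hsh⟩ := ih (B ++ [embed (hDom r) (shiftDown h a)]) (Bh ++ [shiftDown h a]) vb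
      (by simpa using perm_append_singleton_of_perm hB _) hrows hpair
      fun C₁ e C₂ hA => by simpa using hocc (a :: C₁) e C₂ (by simp [hA])
    refine ⟨_, ?_, hsh.consLeft (shiftDown h a)⟩
    change bumpLoop _ B ((a.1, hDom r a.2) :: L) = _
    rw [bumpLoop_cons, hstep]
    exact hC'.trans (List.append_assoc _ _ _)
  | @consRight L A S s _ ih =>
    intro B Bh vb hB hrows hpair hocc
    have hstep := bumpDom_vDom hB (hrows s (by simp)) fun s' hs' =>
      (List.pairwise_append.1 hpair).2.2 s' hs' s (by simp)
    obtain ⟨C', hC', hsh⟩ := ih (B ++ [embed (vDom r) s]) Bh (vb ++ [s])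
      (by simpa using hB.append_right [embed (vDom r) s])
      (by simpa using hrows) (by simpa using hpair) hocc
    refine ⟨_, ?_, hsh.consRight s⟩
    change bumpLoop _ B ((s.1, vDom r s.2) :: L) = _
    rw [bumpLoop_cons, hstep]
    exact hC'.trans (List.append_assoc _ _ _)

theorem rowEnd_coreCells_union {r h : ℕ} (hr : 1 ≤ r) {B : Tab} {Bh vb : List Entry}
    (hB : B.Perm (Bh.map (embed (hDom r)) ++ vb.map (embed (vDom r))))
    (hrow : ∀ k, (∃ p ∈ Bh, p.2 = (1, k)) ↔ k < h) :
    rowEnd (coreCells r ∪ tabCells B) 1 = r + 1 + 2 * h := by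
  have hcells : (coreCells r ∪ tabCells B).filter (fun x => x.1 = 1) =
      (Finset.Icc 1 (r + 2 * h)).image fun y => (1, y) := by
    ext ⟨x, y⟩
    simp only [Finset.mem_filter, Finset.mem_union, mem_tabCells_of_perm hB, mem_coreCells,
      mem_cellsD_hDom, mem_cellsD_vDom, Finset.mem_image, Finset.mem_Icc, Prod.mk.injEq]
    constructor
    · rintro ⟨hx | ⟨p, hp, hxp⟩ | ⟨s, -, hxs⟩, rfl⟩
      · exact ⟨y, by omega, rfl, rfl⟩
      · have := (hrow p.2.2).1 ⟨p, hp, Prod.ext (by omega) rfl⟩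
        exact ⟨y, by omega, rfl, rfl⟩
      · omega
    · rintro ⟨y, hy, rfl, rfl⟩
      refine ⟨?_, rfl⟩
      by_cases hyr : y ≤ r
      · exact Or.inl (by omega)
      · obtain ⟨p, hp, hp2⟩ := (hrow ((y - r - 1) / 2)).2 (by omega)
        exact Or.inr (Or.inl ⟨p, hp, by rw [hp2]; omega⟩)
  rw [rowEnd, hcells, Finset.card_image_of_injective _ fun _ _ e => (Prod.mk.inj e).2,
    Nat.card_Icc]
  omega

theorem dInsert_shuffle_of_pos {r : ℕ} (hr : 1 ≤ r) {T : Tab} {hc vc : List Entry} {a : ℤ}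
    (ha : 0 < a) (hT : Shuffle (embed (hDom r)) (embed (vDom r)) T hc vc)
    (hhc : IsValid hc) (hvc : IsValid vc) (hfresh : ∀ p ∈ hc, p.1 ≠ a.natAbs)
    (hfresh' : ∀ p ∈ vc, p.1 ≠ a.natAbs) (hvr : ∀ p ∈ vc, p.2.1 ≤ r) :
    Shuffle (embed (hDom r)) (embed (vDom r)) (dInsert r T a) (insertLabel a.natAbs hc) vc := by
  have hlow : Shuffle (embed (hDom r)) (embed (vDom r)) (T.filter fun p => decide (p.1 < a.natAbs))
      (lower a.natAbs hc) (lower a.natAbs vc) := hT.filter _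
  have hup : Shuffle (embed (hDom r)) (embed (vDom r)) (T.filter fun p => decide (a.natAbs < p.1))
      (upper a.natAbs hc) (upper a.natAbs vc) := hT.filter _
  have hsplit := lower_append_upper hvc.sorted hfresh'
  let new : Entry := (a.natAbs, 1, insertCol a.natAbs hc)
  obtain ⟨C', hC', hsh⟩ := bumpLoop_shuffle hup _ (lower a.natAbs hc ++ [new]) (lower a.natAbs vc)
    (by simpa using perm_append_singleton_of_perm hlow.perm (embed (hDom r) new))
    (by rwa [hsplit]) (by rw [hsplit]; exact hvc.pairwise_pos_ne)
    fun C₁ e C₂ hCe => hhc.occupied_iff hfresh hCe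
  have hins : dInsert r T a = bumpLoop (coreCells r)
      ((T.filter fun p => decide (p.1 < a.natAbs)) ++ [embed (hDom r) new])
      (T.filter fun p => decide (a.natAbs < p.1)) := by
    simp only [dInsert, if_pos ha, rowEnd_coreCells_union hr hlow.perm hhc.exists_lower_row_one_iff]
    rfl
  rw [hins, hC']
  have := (hlow.append (Shuffle.nil.consLeft new)).append hsh
  rw [List.append_nil, hsplit] at this
  simpa [insertLabel] using this

theorem dInsert_shuffle_of_neg {r : ℕ} (hr : 1 ≤ r) {T : Tab} {hc vc : List Entry} {a : ℤ}
    (ha : a < 0) (hT : Shuffle (embed (hDom r)) (embed (vDom r)) T hc vc)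
    (hhc : IsValid hc) (hvc : IsValid vc) (hfresh : ∀ p ∈ hc, p.1 ≠ a.natAbs)
    (hfresh' : ∀ p ∈ vc, p.1 ≠ a.natAbs) (hhr : ∀ p ∈ hc, p.2.1 ≤ r) :
    Shuffle (embed (hDom r)) (embed (vDom r)) (dInsert r T a) hc (insertLabel a.natAbs vc) := by
  have := dInsert_shuffle_of_pos hr (neg_pos.2 ha) hT.transposeTab hvc hhc
    (by rwa [Int.natAbs_neg]) (by rwa [Int.natAbs_neg]) hhr
  rw [dInsert_transposeTab r T ha.ne, Int.natAbs_neg] at this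
  simpa only [transposeTab_transposeTab] using this.transposeTab

/-! ### Words with at most `r` letters of each sign -/

def posLetters (u : List ℤ) : List ℕ := (u.filter (0 < ·)).map Int.natAbs

def negLetters (u : List ℤ) : List ℕ := (u.filter (· < 0)).map Int.natAbs

/-- This keeps the horizontal half of the insertion tableau within the `r` rows to the right of the
core and the vertical half within the `r` columns below it, so the two never meet. -/
structure FitsCore (r : ℕ) (u : List ℤ) : Prop where
  zero_not_mem : 0 ∉ u
  nodup : (u.map Int.natAbs).Nodup
  pos_le : (posLetters u).length ≤ r
  neg_le : (negLetters u).length ≤ r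

theorem posLetters_sublist_map (u : List ℤ) : (posLetters u).Sublist (u.map Int.natAbs) :=
  List.filter_sublist.map _

theorem negLetters_sublist_map (u : List ℤ) : (negLetters u).Sublist (u.map Int.natAbs) :=
  List.filter_sublist.map _

theorem FitsCore.sublist {r : ℕ} {u u' : List ℤ} (hu : FitsCore r u) (h : u'.Sublist u) :
    FitsCore r u' where
  zero_not_mem := fun h0 => hu.zero_not_mem (h.subset h0)
  nodup := hu.nodup.sublist (h.map _)
  pos_le := ((h.filter _).map _).length_le.trans hu.pos_le
  neg_le := ((h.filter _).map _).length_le.trans hu.neg_le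

theorem FitsCore.perm {r : ℕ} {u u' : List ℤ} (hu : FitsCore r u) (h : u.Perm u') :
    FitsCore r u' where
  zero_not_mem := fun h0 => hu.zero_not_mem (h.mem_iff.2 h0)
  nodup := (h.map _).nodup_iff.1 hu.nodup
  pos_le := ((h.filter _).map _).length_eq ▸ hu.pos_le
  neg_le := ((h.filter _).map _).length_eq ▸ hu.neg_le

theorem FitsCore.map_neg {r : ℕ} {u : List ℤ} (hu : FitsCore r u) : FitsCore r (u.map (- ·)) where
  zero_not_mem := by simpa using hu.zero_not_mem
  nodup := by simpa [Function.comp_def] using hu.nodup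
  pos_le := by simpa [posLetters, negLetters, List.filter_map, Function.comp_def] using hu.neg_le
  neg_le := by simpa [posLetters, negLetters, List.filter_map, Function.comp_def] using hu.pos_le

theorem FitsCore.label_ne {r : ℕ} {u : List ℤ} {a : ℤ} (hu : FitsCore r (u ++ [a])) {l : List ℕ}
    (hl : l.Sublist (u.map Int.natAbs)) : ∀ p ∈ ofList l, p.1 ≠ a.natAbs := fun p hp e => by
  have := hu.nodup
  simp only [List.map_append, List.nodup_append] at this
  exact this.2.2 _ (hl.subset (e ▸ label_mem_of_mem_ofList hp)) _ (by simp) rfl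


theorem posLetters_append_singleton (u : List ℤ) (a : ℤ) :
    posLetters (u ++ [a]) = posLetters u ++ if 0 < a then [a.natAbs] else [] := by
  by_cases ha : 0 < a <;> simp [posLetters, ha]

theorem negLetters_append_singleton (u : List ℤ) (a : ℤ) :
    negLetters (u ++ [a]) = negLetters u ++ if a < 0 then [a.natAbs] else [] := by
  by_cases ha : a < 0 <;> simp [negLetters, ha]

theorem PD_shuffle {r : ℕ} (hr : 1 ≤ r) {u : List ℤ} (hu : FitsCore r u) :
    Shuffle (embed (hDom r)) (embed (vDom r)) (PD r u)
      (ofList (posLetters u)) (ofList (negLetters u)) := by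
  induction u using List.reverseRecOn with
  | nil => exact Shuffle.nil
  | append_singleton u a ih =>
    have hu' := hu.sublist (List.sublist_append_left u [a])
    have hpos := isValid_ofList (hu'.nodup.sublist (posLetters_sublist_map u))
    have hneg := isValid_ofList (hu'.nodup.sublist (negLetters_sublist_map u))
    rw [PD_append_singleton, posLetters_append_singleton, negLetters_append_singleton]
    rcases lt_or_gt_of_ne (fun h => hu.zero_not_mem (by simp [h]) : a ≠ 0) with ha | ha
    · simp only [ha, if_true, (lt_asymm ha), if_false, List.append_nil, ofList_append_singleton]
      exact dInsert_shuffle_of_neg hr ha (ih hu') hpos hneg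
        (hu.label_ne (posLetters_sublist_map u)) (hu.label_ne (negLetters_sublist_map u))
        fun p hp => (row_le_length_of_mem_ofList p hp).trans hu'.pos_le
    · simp only [ha, if_true, (lt_asymm ha), if_false, List.append_nil, ofList_append_singleton]
      exact dInsert_shuffle_of_pos hr ha (ih hu') hpos hneg
        (hu.label_ne (posLetters_sublist_map u)) (hu.label_ne (negLetters_sublist_map u))
        fun p hp => (row_le_length_of_mem_ofList p hp).trans hu'.neg_le

theorem PD_append_pair_comm {r : ℕ} (hr : 1 ≤ r) {u : List ℤ} {a b : ℤ} (hab : a * b < 0)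
    (hu : FitsCore r (u ++ [a, b])) : PD r (u ++ [a, b]) = PD r (u ++ [b, a]) := by
  have hsigns : ¬(0 < a ∧ 0 < b) ∧ ¬(a < 0 ∧ b < 0) := by
    constructor <;> rintro ⟨ha, hb⟩ <;> nlinarith
  have hpos : posLetters (u ++ [a, b]) = posLetters (u ++ [b, a]) := by
    rw [posLetters, posLetters, List.filter_append, List.filter_append,
      List.filter_pair_comm (by simpa using hsigns.1)]
  have hneg : negLetters (u ++ [a, b]) = negLetters (u ++ [b, a]) := by
    rw [negLetters, negLetters, List.filter_append, List.filter_append,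
      List.filter_pair_comm (by simpa using hsigns.2)]
  have hu' := hu.perm (List.Perm.append_left u (List.Perm.swap b a []))
  refine List.Perm.eq_of_pairwise (le := fun p q => p.1 < q.1)
    (fun p q _ _ hpq hqp => absurd (hpq.trans hqp) (lt_irrefl _)) (pairwise_PD r _)
    (pairwise_PD r _) ?_
  refine (PD_shuffle hr hu).perm.trans ?_
  rw [hpos, hneg]
  exact (PD_shuffle hr hu').perm.symm

def newCells (r : ℕ) (u : List ℤ) (a : ℤ) : Finset Cell :=
  tabCells (PD r (u ++ [a])) \ tabCells (PD r u)

theorem newCells_map_neg (r : ℕ) {u : List ℤ} {a : ℤ} (hu : 0 ∉ u) (ha : a ≠ 0) :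
    newCells r (u.map (- ·)) (-a) = (newCells r u a).image Prod.swap := by
  have hua : 0 ∉ u ++ [a] := by simp [hu, Ne.symm ha]
  rw [newCells, newCells, show u.map (- ·) ++ [-a] = (u ++ [a]).map (- ·) by simp,
    PD_map_neg r hu, PD_map_neg r hua, tabCells_transposeTab, tabCells_transposeTab,
    Finset.image_sdiff _ _ Prod.swap_injective]

theorem newCells_of_pos {r : ℕ} (hr : 1 ≤ r) {u : List ℤ} {a : ℤ} (ha : 0 < a)
    (hu : FitsCore r (u ++ [a])) :
    newCells r u a = cellsD (hDom r (newPos a.natAbs (ofList (posLetters u)))) := by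
  have hu' := hu.sublist (List.sublist_append_left u [a])
  have hT := (PD_shuffle hr hu').perm
  have hT' := (PD_shuffle hr hu).perm
  rw [posLetters_append_singleton, negLetters_append_singleton, if_pos ha, if_neg ha.not_gt,
    List.append_nil, ofList_append_singleton] at hT'
  set hc := ofList (posLetters u)
  have hvalid : IsValid hc := isValid_ofList (hu'.nodup.sublist (posLetters_sublist_map u))
  have hnew := exists_mem_cellsD_iff (fd := hDom r)
    (hvalid.exists_pos_insertLabel_iff (hu.label_ne (posLetters_sublist_map u)))
  ext x
  simp only [newCells, Finset.mem_sdiff, mem_tabCells_of_perm hT, mem_tabCells_of_perm hT', hnew]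
  constructor
  · rintro ⟨(hx | hx) | hx, hold⟩
    exacts [absurd (Or.inl hx) hold, hx, absurd (Or.inr hx) hold]
  · intro hx
    refine ⟨Or.inl (Or.inr hx), ?_⟩
    rintro (⟨p, hp, hxp⟩ | ⟨s, hs, hxs⟩)
    · exact Finset.disjoint_left.1
        (disjoint_hDom fun e => hvalid.newPos_not_mem (i := a.natAbs) ⟨p, hp, e.symm⟩) hx hxp
    · exact Finset.disjoint_left.1 (disjoint_hDom_vDom
        ((row_le_length_of_mem_ofList s hs).trans hu'.neg_le)) hx hxs

theorem newCells_append_of_pos_of_neg {r : ℕ} (hr : 1 ≤ r) {u : List ℤ} {a b : ℤ} (ha : 0 < a)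
    (hb : b < 0) (hu : FitsCore r (u ++ [b, a])) : newCells r (u ++ [b]) a = newCells r u a := by
  rw [newCells_of_pos hr ha (by simpa using hu),
    newCells_of_pos hr ha (hu.sublist ((List.sublist_cons_self b [a]).append_left u)),
    posLetters_append_singleton, if_neg hb.not_gt, List.append_nil]

theorem newCells_append_of_mul_neg {r : ℕ} (hr : 1 ≤ r) {u : List ℤ} {a b : ℤ} (hab : a * b < 0)
    (hu : FitsCore r (u ++ [b, a])) : newCells r (u ++ [b]) a = newCells r u a := by
  rcases mul_neg_iff.1 hab with ⟨ha, hb⟩ | ⟨ha, hb⟩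
  · exact newCells_append_of_pos_of_neg hr ha hb hu
  · have h0 : 0 ∉ u ++ [b] := fun h => hu.zero_not_mem (by simp at h ⊢; tauto)
    apply Finset.image_injective Prod.swap_injective
    rw [← newCells_map_neg r h0 ha.ne, ← newCells_map_neg r (by simp_all) ha.ne, List.map_append,
      List.map_singleton]
    exact newCells_append_of_pos_of_neg hr (neg_pos.2 ha) (neg_neg_of_pos hb)
      (by simpa using hu.map_neg)

theorem fitsCore_append_pair {r : ℕ} {u : List ℤ} {a b : ℤ} (hab : a * b < 0) (hu : 0 ∉ u)
    (hnd : ((u ++ [a, b]).map Int.natAbs).Nodup) (hlen : u.length < r) :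
    FitsCore r (u ++ [a, b]) := by
  rcases mul_neg_iff.1 hab with ⟨ha, hb⟩ | ⟨ha, hb⟩
  all_goals refine ⟨by simp [hu, ha.ne', hb.ne, ha.ne, hb.ne'], hnd, ?_, ?_⟩
  all_goals
    simp only [posLetters, negLetters, List.filter_append, List.map_append, List.length_append,
      List.length_map]
    have := List.length_filter_le (fun x : ℤ => decide (0 < x)) u
    have := List.length_filter_le (fun x : ℤ => decide (x < 0)) u
    simp [ha, hb, ha.not_gt, hb.not_gt]
    omega

theorem Qcell_append_swap (r : ℕ) {P S : List ℤ} {a b : ℤ}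
    (hPD : PD r (P ++ [a, b]) = PD r (P ++ [b, a]))
    (ha : newCells r (P ++ [b]) a = newCells r P a)
    (hb : newCells r (P ++ [a]) b = newCells r P b) (k : ℕ) :
    Qcell r (P ++ b :: a :: S) k =
      Qcell r (P ++ a :: b :: S) (Equiv.swap (P.length + 1) (P.length + 2) k) := by
  have htake : ∀ x y : ℤ, (P ++ x :: y :: S).take P.length = P ∧
      (P ++ x :: y :: S).take (P.length + 1) = P ++ [x] ∧
      (P ++ x :: y :: S).take (P.length + 2) = P ++ [x, y] := fun x y => by
    simp [List.take_append]
  obtain hk | rfl | rfl | hk :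
      k ≤ P.length ∨ k = P.length + 1 ∨ k = P.length + 2 ∨ P.length + 2 < k := by omega
  · rw [Equiv.swap_apply_of_ne_of_ne (by omega) (by omega), Qcell, Qcell,
      List.take_append_of_le_length hk, List.take_append_of_le_length (by omega),
      List.take_append_of_le_length hk, List.take_append_of_le_length (by omega)]
  · rw [Equiv.swap_apply_left, Qcell, Qcell, Nat.add_sub_cancel,
      show P.length + 2 - 1 = P.length + 1 by omega, (htake _ _).1, (htake _ _).2.1,
      (htake _ _).2.1, (htake _ _).2.2]
    simpa [newCells] using hb.symm
  · rw [Equiv.swap_apply_right, Qcell, Qcell, show P.length + 2 - 1 = P.length + 1 by omega,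
      Nat.add_sub_cancel, (htake _ _).1, (htake _ _).2.1, (htake _ _).2.1, (htake _ _).2.2]
    simpa [newCells] using ha
  · rw [Equiv.swap_apply_of_ne_of_ne (by omega) (by omega)]
    obtain ⟨t, rfl⟩ : ∃ t, k = P.length + 2 + (t + 1) := ⟨k - P.length - 3, by omega⟩
    rw [Qcell, Qcell, show P.length + 2 + (t + 1) - 1 = P.length + 2 + t by omega]
    simp only [List.take_append_cons_cons]
    rw [PD_append r (P ++ [a, b]), PD_append r (P ++ [b, a]), PD_append r (P ++ [a, b]),
      PD_append r (P ++ [b, a]), hPD]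

end DominoInsertion

open DominoInsertion

/-- If signed permutations `w ∼ v` of `[n]` are related by a `D_2^r` relation
(`v` is obtained from `w` by swapping the adjacent letters `w_j, w_{j+1}` of opposite
signs, where `1 ≤ j ≤ r`), then the recording `r`-domino tableau `Q_D^r(v)` is
obtained from `Q_D^r(w)` by interchanging the labels `j` and `j+1`. -/
theorem D2r_recording_swap (n r : ℕ) (hr : 1 ≤ r) (w v : List ℤ) (hwlen : w.length = n)
    (hperm : List.Perm (w.map Int.natAbs) ((List.range n).map (· + 1)))
    (j : ℕ) (hj1 : 1 ≤ j) (hjr : j ≤ r) (hjn : j + 1 ≤ n)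
    (hsign : w.getD (j - 1) 0 * w.getD j 0 < 0)
    (hv : v = (w.set (j - 1) (w.getD j 0)).set j (w.getD (j - 1) 0)) :
    ∀ k, 1 ≤ k → k ≤ n →
      Qcell r v k = Qcell r w (if k = j then j + 1 else if k = j + 1 then j else k) := by
  intro k _ _
  have h0 : 0 ∉ w := fun h => by simpa using hperm.subset (List.mem_map_of_mem (f := Int.natAbs) h)
  have hnd : (w.map Int.natAbs).Nodup :=
    hperm.nodup_iff.2 (List.nodup_range.map (add_left_injective 1))
  obtain ⟨m, rfl⟩ : ∃ m, j = m + 1 := ⟨j - 1, by omega⟩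
  rw [Nat.add_sub_cancel] at hsign hv
  obtain ⟨P, S, hw, rfl⟩ := w.exists_eq_append_getD_cons 0 (i := m) (by omega)
  generalize w.getD P.length 0 = a, w.getD (P.length + 1) 0 = b at hw hsign hv
  subst hw hv
  rw [List.set_set_append_cons_cons, ← Equiv.swap_apply_def]
  have hfit : FitsCore r (P ++ [a, b]) := fitsCore_append_pair hsign (by simp_all)
    (hnd.sublist (by simp)) (by omega)
  exact Qcell_append_swap r (PD_append_pair_comm hr hsign hfit)
    (newCells_append_of_mul_neg hr hsign (hfit.perm ((List.Perm.swap b a []).append_left P)))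
    (newCells_append_of_mul_neg hr (by linarith) hfit) k
end

section
/- Let w ∈ W^BC_n with |w_1| > |w_2| and n ≥ 2. Under domino insertion with core δ_0 (empty core), the insertion tableaux of w_1 w_2 and of (−w_1) w_2 after two steps are equal; moreover if w_1 > 0 the recording tableau of w after two steps is the vertical 2×2 tableau with horizontal dominoes labeled 1 (top) and 2 (bottom), while the recording tableau of (−w_1) w_2 after two steps is the 2×2 tableau with vertical dominoes labeled 1 (left) and 2 (right). -/
/-! After one step the tableau is a single domino at the corner, horizontal or vertical according
to the sign of the first letter. A smaller second letter takes the corner, and the old domino is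
bumped to the same place whatever its orientation: below the new one if the second letter is
positive, to its right otherwise. So both words give the same 2 × 2 tableau, and the recording
tableau is the first domino together with its complement in the 2 × 2 square. -/

theorem PD_singleton (x : ℤ) (hx : x ≠ 0) :
    PD 0 [x] = [(x.natAbs, ((1, 1), decide (0 < x)))] := by
  rcases hx.lt_or_gt with h | h
  · simp [PD, dInsert, bumpLoop, coreCells, tabCells, colEnd, h.not_gt]
  · simp [PD, dInsert, bumpLoop, coreCells, tabCells, rowEnd, h]

theorem dInsert_singleton_of_natAbs_lt (n : ℕ) (b : Bool) (y : ℤ) (h : y.natAbs < n) :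
    dInsert 0 [(n, ((1, 1), b))] y =
      if 0 < y then [(y.natAbs, ((1, 1), true)), (n, ((2, 1), true))]
      else [(y.natAbs, ((1, 1), false)), (n, ((1, 2), false))] := by
  by_cases hy : 0 < y <;> cases b <;>
    simp [dInsert, bumpLoop, tabCells, cellsD, coreCells, rowEnd, colEnd, h, h.not_gt, hy]

theorem PD_pair_of_abs_lt {x y : ℤ} (h : |y| < |x|) :
    PD 0 [x, y] =
      if 0 < y then [(y.natAbs, ((1, 1), true)), (x.natAbs, ((2, 1), true))]
      else [(y.natAbs, ((1, 1), false)), (x.natAbs, ((1, 2), false))] := by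
  have hx : x ≠ 0 := by rintro rfl; exact (abs_nonneg y).not_gt (by simpa using h)
  have hxy : y.natAbs < x.natAbs := Int.natAbs_lt_iff_sq_lt.mpr (sq_lt_sq.mpr h)
  show dInsert 0 (PD 0 [x]) y = _
  rw [PD_singleton x hx, dInsert_singleton_of_natAbs_lt _ _ _ hxy]

theorem PD_neg_pair_of_abs_lt {x y : ℤ} (h : |y| < |x|) : PD 0 [-x, y] = PD 0 [x, y] := by
  rw [PD_pair_of_abs_lt h, PD_pair_of_abs_lt (by rwa [abs_neg]), Int.natAbs_neg]

theorem tabCells_PD_pair_of_abs_lt {x y : ℤ} (h : |y| < |x|) :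
    tabCells (PD 0 [x, y]) = {(1, 1), (1, 2), (2, 1), (2, 2)} := by
  rw [PD_pair_of_abs_lt h]
  split_ifs <;> simp [tabCells, cellsD] <;> decide

theorem tabCells_singleton (p : ℕ × Dom) : tabCells [p] = cellsD p.2 := by
  simp [tabCells]

theorem Qcell_cons_one (r : ℕ) (x : ℤ) (w : List ℤ) :
    Qcell r (x :: w) 1 = tabCells (PD r [x]) := by
  simp [Qcell, PD, tabCells]

theorem Qcell_pair_two (r : ℕ) (x y : ℤ) :
    Qcell r [x, y] 2 = tabCells (PD r [x, y]) \ tabCells (PD r [x]) := rfl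

theorem D30_two_step_insertion_general (w1 w2 : ℤ) (h12 : |w2| < |w1|) :
    (∀ i : ℕ, pcells (PD 0 [w1, w2]) i = pcells (PD 0 [-w1, w2]) i) ∧
    (0 < w1 →
      Qcell 0 [w1, w2] 1 = ({(1, 1), (1, 2)} : Finset Cell) ∧
      Qcell 0 [w1, w2] 2 = ({(2, 1), (2, 2)} : Finset Cell) ∧
      Qcell 0 [-w1, w2] 1 = ({(1, 1), (2, 1)} : Finset Cell) ∧
      Qcell 0 [-w1, w2] 2 = ({(1, 2), (2, 2)} : Finset Cell)) := by
  refine ⟨fun i => by rw [PD_neg_pair_of_abs_lt h12], fun hpos => ?_⟩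
  have hneg : ¬ 0 < -w1 := by omega
  have h12' : |w2| < |-w1| := by rwa [abs_neg]
  simp only [Qcell_cons_one, Qcell_pair_two, tabCells_PD_pair_of_abs_lt h12,
    tabCells_PD_pair_of_abs_lt h12', PD_singleton w1 hpos.ne', PD_singleton (-w1) (by omega),
    tabCells_singleton, hpos, hneg, decide_true, decide_false]
  decide

/-- Let `|w₁| > |w₂| ≥ 1`.  Under domino insertion with empty core (`r = 0`), the
insertion tableaux of `w₁ w₂` and of `(-w₁) w₂` after two steps coincide; moreover
if `w₁ > 0` the recording tableau of `w₁ w₂` consists of the horizontal dominoes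
`{(1,1),(1,2)}` labelled `1` and `{(2,1),(2,2)}` labelled `2`, while the recording
tableau of `(-w₁) w₂` consists of the vertical dominoes `{(1,1),(2,1)}` labelled `1`
and `{(1,2),(2,2)}` labelled `2`. -/
theorem D30_two_step_insertion (w1 w2 : ℤ) (h0 : w2 ≠ 0) (h12 : |w2| < |w1|) :
    (∀ i : ℕ, pcells (PD 0 [w1, w2]) i = pcells (PD 0 [-w1, w2]) i) ∧
    (0 < w1 →
      Qcell 0 [w1, w2] 1 = ({(1, 1), (1, 2)} : Finset Cell) ∧
      Qcell 0 [w1, w2] 2 = ({(2, 1), (2, 2)} : Finset Cell) ∧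
      Qcell 0 [-w1, w2] 1 = ({(1, 1), (2, 1)} : Finset Cell) ∧
      Qcell 0 [-w1, w2] 2 = ({(1, 2), (2, 2)} : Finset Cell)) :=
  D30_two_step_insertion_general w1 w2 h12
end

section
/- If y, z ∈ I_n are involutions in S_n with y ≈_i z (meaning there exists w ∈ S_n with y ~K_i~ w ~dK_i~ z) and A := {i-1, i, i+1}, then z = y if y(A) ≠ A and y(i) is between y(i-1) and y(i+1); z = (i-1,i) y (i-1,i) if y(A) ≠ A and y(i+1) is between y(i-1) and y(i); z = (i,i+1) y (i,i+1) if y(A) ≠ A and y(i-1) is between y(i) and y(i+1); and z = (i-1,i+1) y (i-1,i+1) if y(A) = A. -/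
/-- `BtwVal a b c` : the value `b` lies strictly between `a` and `c`. -/
def BtwVal (a b c : ℕ) : Prop := (a < b ∧ b < c) ∨ (c < b ∧ b < a)

/-- `KmoveAt i v w` : `w` is obtained from `v` by a Knuth move on the positions
`i-1, i, i+1` of the one-line notation, or `w = v` when the subword
`v_{i-1} v_i v_{i+1}` is in monotonic order. -/
def KmoveAt (i : ℕ) (v w : Equiv.Perm ℕ) : Prop :=
  (BtwVal (v (i - 1)) (v i) (v (i + 1)) ∧ w = v) ∨
  (BtwVal (v (i - 1)) (v (i + 1)) (v i) ∧ w = v * Equiv.swap (i - 1) i) ∨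
  (BtwVal (v i) (v (i - 1)) (v (i + 1)) ∧ w = v * Equiv.swap i (i + 1))

/-!
A Knuth move at `i` multiplies on the right by a factor `σ ∈ {1, s, t}`, where `s = (i-1 i)`,
`t = (i i+1)`, and `σ` is read off the relative order of `v(i-1), v(i), v(i+1)`. Hence `y ≈_i z`
forces `z = σ y τ`, with `σ` the factor of `y` and `τ` that of `σ y`; as `y`, `z`, `σ`, `τ` are
involutions, also `σ y τ = τ y σ`.

If `σ = s`, then `τ = 1` would make `y` commute with `s`, so `y` would permute `{i-1, i}` and
`y(i+1)` could not lie strictly between `y(i-1)` and `y(i)`; and `τ = t` gives `s y t = t y s`,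
which forces `y(A) = A`. So `τ = s` unless `y(A) = A`, and symmetrically for `σ = t`. If
`y(A) = A`, then `y` acts on `A` as one of the four involutions of `A`, and `σ`, `τ` are computed
directly.
-/

open Equiv

namespace Equiv.Perm

variable {α : Type*} [DecidableEq α] {a b c : α} {y : Perm α}

theorem swap_mul_mul_swap_eq_self (h : swap (y a) (y c) = swap a c) :
    swap a c * y * swap a c = y := by
  rw [mul_assoc, mul_swap_eq_swap_mul, h, ← mul_assoc, swap_mul_self, one_mul]

theorem apply_eq_or_of_mul_swap_eq_swap_mul (hab : a ≠ b) (h : y * swap a b = swap a b * y) :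
    y a = a ∨ y a = b := by
  have hb : y b = swap a b (y a) := by simpa using congrArg (· a) h
  rw [swap_apply_def] at hb
  split_ifs at hb with h₁ h₂
  · exact Or.inl h₁
  · exact Or.inr h₂
  · exact absurd (y.injective hb) hab.symm

theorem mapsTo_of_swap_mul_mul_swap_comm (hab : a ≠ b) (hbc : b ≠ c) (hac : a ≠ c)
    (h : swap a b * y * swap b c = swap b c * y * swap a b) :
    Set.MapsTo y {a, b, c} {a, b, c} := by
  have ha : swap a b (y a) = swap b c (y b) := by
    simpa [swap_apply_of_ne_of_ne hab hac] using congrArg (· a) h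
  have hb : swap a b (y c) = swap b c (y a) := by simpa using congrArg (· b) h
  -- a value outside `{a, b, c}` is fixed by both swaps, so either side pins down the other
  have fixed {p q : α} (hp : p ∉ ({a, b, c} : Set α)) :
      (swap a b q = p ↔ q = p) ∧ (swap b c q = p ↔ q = p) := by
    simp only [Set.mem_insert_iff, Set.mem_singleton_iff, not_or] at hp
    rw [swap_apply_eq_iff, swap_apply_eq_iff, swap_apply_of_ne_of_ne hp.1 hp.2.1,
      swap_apply_of_ne_of_ne hp.2.1 hp.2.2]
    exact ⟨Iff.rfl, Iff.rfl⟩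
  intro x hx
  by_contra hout
  rcases hx with rfl | rfl | rfl
  · exact hab (y.injective ((fixed hout).2.1 (ha.symm.trans ((fixed hout).1.2 rfl)))).symm
  · exact hab (y.injective ((fixed hout).1.1 (ha.trans ((fixed hout).2.2 rfl))))
  · exact hac (y.injective ((fixed hout).2.1 (hb.symm.trans ((fixed hout).1.2 rfl))))

theorem image_eq_of_swap_mul_mul_swap_comm (hab : a ≠ b) (hbc : b ≠ c) (hac : a ≠ c)
    (h : swap a b * y * swap b c = swap b c * y * swap a b) :
    y '' {a, b, c} = {a, b, c} :=
  ((Set.toFinite _).injOn_iff_bijOn_of_mapsTo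
    (mapsTo_of_swap_mul_mul_swap_comm hab hbc hac h)).1 y.injective.injOn |>.image_eq

theorem swap_mul_mul_swap_eq_swap_conj (hab : a ≠ b) (hac : a ≠ c)
    (ha : y a = b) (hb : y b = a) (hc : y c = c) :
    swap b c * y * swap a b = swap a c * y * swap a c :=
  calc swap b c * y * swap a b = swap b c * swap a b * y := by
        rw [mul_assoc, mul_swap_eq_swap_mul, ha, hb, swap_comm b a, mul_assoc]
    _ = swap a c * swap b c * y := by
        rw [swap_comm a c, ← swap_mul_swap_mul_swap hab hac, mul_assoc _ _ (swap b c),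
          swap_mul_self, mul_one]
    _ = swap a c * y * swap a c := by
        rw [mul_assoc, mul_assoc, mul_swap_eq_swap_mul, ha, hc]

end Equiv.Perm

theorem mul_mul_eq_rev_of_mul_self_eq_one {G : Type*} [Group G] {σ τ y : G} (hσ : σ * σ = 1)
    (hτ : τ * τ = 1) (hy : y * y = 1) (h : σ * y * τ * (σ * y * τ) = 1) :
    σ * y * τ = τ * y * σ := by
  rw [← inv_eq_of_mul_eq_one_right h, mul_inv_rev, mul_inv_rev, inv_eq_of_mul_eq_one_right hσ,
    inv_eq_of_mul_eq_one_right hτ, inv_eq_of_mul_eq_one_right hy, mul_assoc]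

instance (a b c : ℕ) : Decidable (BtwVal a b c) := by
  unfold BtwVal; infer_instance

theorem btwVal_trichotomy {p q r : ℕ} (hpq : p ≠ q) (hpr : p ≠ r) (hqr : q ≠ r) :
    BtwVal p q r ∨ BtwVal p r q ∨ BtwVal q p r := by
  unfold BtwVal; omega

def knuthFactor (i : ℕ) (v : Perm ℕ) : Perm ℕ :=
  if BtwVal (v (i - 1)) (v (i + 1)) (v i) then swap (i - 1) i
  else if BtwVal (v i) (v (i - 1)) (v (i + 1)) then swap i (i + 1)
  else 1

section knuthFactor

variable {i : ℕ} {v w : Perm ℕ}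

theorem knuthFactor_of_btwVal_mid (h : BtwVal (v (i - 1)) (v i) (v (i + 1))) :
    knuthFactor i v = 1 := by
  unfold BtwVal at h
  rw [knuthFactor, if_neg (by unfold BtwVal; omega), if_neg (by unfold BtwVal; omega)]

theorem knuthFactor_of_btwVal_right (h : BtwVal (v (i - 1)) (v (i + 1)) (v i)) :
    knuthFactor i v = swap (i - 1) i :=
  if_pos h

theorem knuthFactor_of_btwVal_left (h : BtwVal (v i) (v (i - 1)) (v (i + 1))) :
    knuthFactor i v = swap i (i + 1) := by
  rw [knuthFactor, if_neg (by unfold BtwVal at *; omega), if_pos h]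

theorem knuthFactor_eq_or :
    knuthFactor i v = 1 ∨ knuthFactor i v = swap (i - 1) i ∨ knuthFactor i v = swap i (i + 1) := by
  unfold knuthFactor
  split_ifs <;> simp

theorem knuthFactor_mul_self : knuthFactor i v * knuthFactor i v = 1 := by
  rcases knuthFactor_eq_or (i := i) (v := v) with h | h | h <;> simp [h]

theorem KmoveAt.eq_mul_knuthFactor (h : KmoveAt i v w) : w = v * knuthFactor i v := by
  rcases h with ⟨hb, rfl⟩ | ⟨hb, rfl⟩ | ⟨hb, rfl⟩
  · rw [knuthFactor_of_btwVal_mid hb, mul_one]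
  · rw [knuthFactor_of_btwVal_right hb]
  · rw [knuthFactor_of_btwVal_left hb]

end knuthFactor

theorem eq_knuthFactor_mul_mul_knuthFactor {i : ℕ} {y z w : Perm ℕ} (hy : y * y = 1)
    (hz : z * z = 1) (h₁ : KmoveAt i y w) (h₂ : KmoveAt i w⁻¹ z⁻¹) :
    z = knuthFactor i y * y * knuthFactor i (knuthFactor i y * y) := by
  have hw : w⁻¹ = knuthFactor i y * y := by
    rw [h₁.eq_mul_knuthFactor, mul_inv_rev, inv_eq_of_mul_eq_one_right knuthFactor_mul_self,
      inv_eq_of_mul_eq_one_right hy]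
  rw [← inv_eq_of_mul_eq_one_right hz, h₂.eq_mul_knuthFactor, hw]

section involution

variable {i : ℕ} {y τ : Perm ℕ}

theorem eq_swap_of_btwVal_right (hi : 0 < i) (hb : BtwVal (y (i - 1)) (y (i + 1)) (y i))
    (hA : y '' {i - 1, i, i + 1} ≠ {i - 1, i, i + 1})
    (hτ : τ = 1 ∨ τ = swap (i - 1) i ∨ τ = swap i (i + 1))
    (hcomm : swap (i - 1) i * y * τ = τ * y * swap (i - 1) i) : τ = swap (i - 1) i := by
  rcases hτ with rfl | rfl | rfl
  · rw [mul_one, one_mul] at hcomm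
    have h₁ := Perm.apply_eq_or_of_mul_swap_eq_swap_mul (by omega) hcomm.symm
    rw [swap_comm] at hcomm
    have h₂ := Perm.apply_eq_or_of_mul_swap_eq_swap_mul (by omega) hcomm.symm
    unfold BtwVal at hb
    omega
  · rfl
  · exact absurd (Perm.image_eq_of_swap_mul_mul_swap_comm (by omega) (by omega) (by omega) hcomm) hA

theorem eq_swap_of_btwVal_left (hi : 0 < i) (hb : BtwVal (y i) (y (i - 1)) (y (i + 1)))
    (hA : y '' {i - 1, i, i + 1} ≠ {i - 1, i, i + 1})
    (hτ : τ = 1 ∨ τ = swap (i - 1) i ∨ τ = swap i (i + 1))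
    (hcomm : swap i (i + 1) * y * τ = τ * y * swap i (i + 1)) : τ = swap i (i + 1) := by
  rcases hτ with rfl | rfl | rfl
  · rw [mul_one, one_mul] at hcomm
    have h₁ := Perm.apply_eq_or_of_mul_swap_eq_swap_mul (by omega) hcomm.symm
    rw [swap_comm] at hcomm
    have h₂ := Perm.apply_eq_or_of_mul_swap_eq_swap_mul (by omega) hcomm.symm
    unfold BtwVal at hb
    omega
  · exact absurd (Perm.image_eq_of_swap_mul_mul_swap_comm (by omega) (by omega) (by omega)
      hcomm.symm) hA
  · rfl

theorem knuthFactor_mul_mul_knuthFactor_of_swap_left (hi : 0 < i) (h₁ : y (i - 1) = i) (h₂ : y i = i - 1)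
    (h₃ : y (i + 1) = i + 1) :
    knuthFactor i y * y * knuthFactor i (knuthFactor i y * y) =
      swap (i - 1) (i + 1) * y * swap (i - 1) (i + 1) := by
  have hσ : knuthFactor i y = swap i (i + 1) :=
    knuthFactor_of_btwVal_left (by unfold BtwVal; omega)
  have hτ : knuthFactor i (swap i (i + 1) * y) = swap (i - 1) i := by
    refine knuthFactor_of_btwVal_right ?_
    simp only [BtwVal, Perm.mul_apply, h₁, h₂, h₃, swap_apply_def]
    split_ifs <;> omega
  rw [hσ, hτ, Perm.swap_mul_mul_swap_eq_swap_conj (by omega) (by omega) h₁ h₂ h₃]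

theorem knuthFactor_mul_mul_knuthFactor_of_swap_right (hi : 0 < i) (h₁ : y (i - 1) = i - 1) (h₂ : y i = i + 1)
    (h₃ : y (i + 1) = i) :
    knuthFactor i y * y * knuthFactor i (knuthFactor i y * y) =
      swap (i - 1) (i + 1) * y * swap (i - 1) (i + 1) := by
  have hσ : knuthFactor i y = swap (i - 1) i :=
    knuthFactor_of_btwVal_right (by unfold BtwVal; omega)
  have hτ : knuthFactor i (swap (i - 1) i * y) = swap i (i + 1) := by
    refine knuthFactor_of_btwVal_left ?_
    simp only [BtwVal, Perm.mul_apply, h₁, h₂, h₃, swap_apply_def]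
    split_ifs <;> omega
  rw [hσ, hτ, swap_comm (i - 1) i, swap_comm i (i + 1), swap_comm (i - 1) (i + 1)]
  exact Perm.swap_mul_mul_swap_eq_swap_conj (by omega) (by omega) h₃ h₂ h₁

theorem knuthFactor_mul_mul_knuthFactor_of_image_eq (hi : 0 < i) (hy : y * y = 1)
    (hA : y '' {i - 1, i, i + 1} = {i - 1, i, i + 1}) :
    knuthFactor i y * y * knuthFactor i (knuthFactor i y * y) =
      swap (i - 1) (i + 1) * y * swap (i - 1) (i + 1) := by
  have hmem (x : ℕ) (hx : x ∈ ({i - 1, i, i + 1} : Set ℕ)) :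
      y x = i - 1 ∨ y x = i ∨ y x = i + 1 := by
    have hyx := Set.mem_image_of_mem y hx
    rwa [hA] at hyx
  have h₁ := hmem (i - 1) (by simp)
  have h₂ := hmem i (by simp)
  have h₃ := hmem (i + 1) (by simp)
  have hinv (x : ℕ) : y (y x) = x := by rw [← Perm.mul_apply, hy, Perm.one_apply]
  have d₁₂ : y (i - 1) ≠ y i := y.injective.ne (by omega)
  have d₁₃ : y (i - 1) ≠ y (i + 1) := y.injective.ne (by omega)
  have d₂₃ : y i ≠ y (i + 1) := y.injective.ne (by omega)
  rcases btwVal_trichotomy d₁₂ d₁₃ d₂₃ with hb | hb | hb <;> unfold BtwVal at hb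
  · rw [knuthFactor_of_btwVal_mid hb, one_mul, knuthFactor_of_btwVal_mid hb, mul_one]
    refine (Perm.swap_mul_mul_swap_eq_self ?_).symm
    obtain ⟨e₁, e₃⟩ | ⟨e₁, e₃⟩ : y (i - 1) = i - 1 ∧ y (i + 1) = i + 1 ∨
        y (i - 1) = i + 1 ∧ y (i + 1) = i - 1 := by omega
    · rw [e₁, e₃]
    · rw [e₁, e₃, swap_comm]
  · have e₃ : y (i + 1) = i := by omega
    have e₂ : y i = i + 1 := by simpa [e₃] using hinv (i + 1)
    exact knuthFactor_mul_mul_knuthFactor_of_swap_right hi (by omega) e₂ e₃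
  · have e₁ : y (i - 1) = i := by omega
    have e₂ : y i = i - 1 := by simpa [e₁] using hinv (i - 1)
    exact knuthFactor_mul_mul_knuthFactor_of_swap_left hi e₁ e₂ (by omega)

end involution

theorem knuth_dualKnuth_involution_general (i : ℕ) (hi1 : 1 < i)
    (y z : Equiv.Perm ℕ) (hy : y * y = 1) (hz : z * z = 1)
    (h : ∃ w : Equiv.Perm ℕ, KmoveAt i y w ∧ KmoveAt i w⁻¹ z⁻¹) :
    ((⇑y) '' ({i - 1, i, i + 1} : Set ℕ) ≠ ({i - 1, i, i + 1} : Set ℕ) ∧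
        BtwVal (y (i - 1)) (y i) (y (i + 1)) → z = y) ∧
    ((⇑y) '' ({i - 1, i, i + 1} : Set ℕ) ≠ ({i - 1, i, i + 1} : Set ℕ) ∧
        BtwVal (y (i - 1)) (y (i + 1)) (y i) →
          z = Equiv.swap (i - 1) i * y * Equiv.swap (i - 1) i) ∧
    ((⇑y) '' ({i - 1, i, i + 1} : Set ℕ) ≠ ({i - 1, i, i + 1} : Set ℕ) ∧
        BtwVal (y i) (y (i - 1)) (y (i + 1)) →
          z = Equiv.swap i (i + 1) * y * Equiv.swap i (i + 1)) ∧
    ((⇑y) '' ({i - 1, i, i + 1} : Set ℕ) = ({i - 1, i, i + 1} : Set ℕ) →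
          z = Equiv.swap (i - 1) (i + 1) * y * Equiv.swap (i - 1) (i + 1)) := by
  obtain ⟨w, h₁, h₂⟩ := h
  have hi : 0 < i := by omega
  have hz' := eq_knuthFactor_mul_mul_knuthFactor hy hz h₁ h₂
  have hcomm := mul_mul_eq_rev_of_mul_self_eq_one knuthFactor_mul_self knuthFactor_mul_self hy
    (hz' ▸ hz)
  refine ⟨fun ⟨_, hb⟩ => ?_, fun ⟨hA, hb⟩ => ?_, fun ⟨hA, hb⟩ => ?_, fun hA => ?_⟩
  · rw [hz', knuthFactor_of_btwVal_mid hb, one_mul, knuthFactor_of_btwVal_mid hb, mul_one]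
  · rw [knuthFactor_of_btwVal_right hb] at hz' hcomm
    rw [hz', eq_swap_of_btwVal_right hi hb hA knuthFactor_eq_or hcomm]
  · rw [knuthFactor_of_btwVal_left hb] at hz' hcomm
    rw [hz', eq_swap_of_btwVal_left hi hb hA knuthFactor_eq_or hcomm]
  · rw [hz', knuthFactor_mul_mul_knuthFactor_of_image_eq hi hy hA]

/-- If `y, z ∈ I_n` are involutions in `S_n` with `y ≈_i z` (there is `w ∈ S_n`
with `y ~K_i~ w ~dK_i~ z`) and `A = {i-1, i, i+1}`, then: `z = y` if `y(A) ≠ A` and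
`y(i)` is between `y(i-1)` and `y(i+1)`; `z = (i-1,i)·y·(i-1,i)` if `y(A) ≠ A` and
`y(i+1)` is between `y(i-1)` and `y(i)`; `z = (i,i+1)·y·(i,i+1)` if `y(A) ≠ A` and
`y(i-1)` is between `y(i)` and `y(i+1)`; and `z = (i-1,i+1)·y·(i-1,i+1)` if
`y(A) = A`. -/
theorem knuth_dualKnuth_involution (n i : ℕ) (hi1 : 1 < i) (hi2 : i < n)
    (y z : Equiv.Perm ℕ) (hy : y * y = 1) (hz : z * z = 1)
    (hyn : ∀ j, (j = 0 ∨ n < j) → y j = j) (hzn : ∀ j, (j = 0 ∨ n < j) → z j = j)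
    (h : ∃ w : Equiv.Perm ℕ, KmoveAt i y w ∧ KmoveAt i w⁻¹ z⁻¹) :
    ((⇑y) '' ({i - 1, i, i + 1} : Set ℕ) ≠ ({i - 1, i, i + 1} : Set ℕ) ∧
        BtwVal (y (i - 1)) (y i) (y (i + 1)) → z = y) ∧
    ((⇑y) '' ({i - 1, i, i + 1} : Set ℕ) ≠ ({i - 1, i, i + 1} : Set ℕ) ∧
        BtwVal (y (i - 1)) (y (i + 1)) (y i) →
          z = Equiv.swap (i - 1) i * y * Equiv.swap (i - 1) i) ∧
    ((⇑y) '' ({i - 1, i, i + 1} : Set ℕ) ≠ ({i - 1, i, i + 1} : Set ℕ) ∧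
        BtwVal (y i) (y (i - 1)) (y (i + 1)) →
          z = Equiv.swap i (i + 1) * y * Equiv.swap i (i + 1)) ∧
    ((⇑y) '' ({i - 1, i, i + 1} : Set ℕ) = ({i - 1, i, i + 1} : Set ℕ) →
          z = Equiv.swap (i - 1) (i + 1) * y * Equiv.swap (i - 1) (i + 1)) :=
  knuth_dualKnuth_involution_general i hi1 y z hy hz h
end

section
/- For a fixed-point-free signed involution v ∈ G^{BC,m}_n and i ∈ [n-1], exactly one of the following four conditions holds: (weak descent) v(i) = i+1 or v(i) = -i-1; (weak ascent) n < v(i) < v(i+1) or v(i) < v(i+1) < -n; (strict descent) i+1 ≠ v(i) > v(i+1) ≠ i; (strict ascent) otherwise. In particular the four sets Des^=, Asc^=, Des^<, Asc^< restricted to {s_1,...,s_{n-1}} partition that set. -/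
/-- The type `B` Coxeter group `W^BC_n` of signed permutations, realized as the
subgroup of `Equiv.Perm ℤ` of permutations `w` with `w(-i) = -w(i)` which fix
every integer `i` with `i = 0` or `|i| > n`. -/
def WBC (n : ℕ) : Subgroup (Equiv.Perm ℤ) where
  carrier := {w | (∀ i : ℤ, w (-i) = - w i) ∧ (∀ i : ℤ, (i = 0 ∨ (n : ℤ) < |i|) → w i = i)}
  one_mem' := by refine ⟨fun i => ?_, fun i _ => ?_⟩ <;> simp
  mul_mem' := by
    rintro a b ⟨ha1, ha2⟩ ⟨hb1, hb2⟩
    refine ⟨fun i => ?_, fun i hi => ?_⟩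
    · simp [Equiv.Perm.mul_apply, hb1, ha1]
    · simp [Equiv.Perm.mul_apply, hb2 i hi, ha2 i hi]
  inv_mem' := by
    rintro a ⟨ha1, ha2⟩
    refine ⟨fun i => ?_, fun i hi => ?_⟩
    · apply a.injective
      simp [ha1, Equiv.Perm.inv_def]
    · apply a.injective
      rw [Equiv.Perm.inv_def, Equiv.apply_symm_apply, ha2 i hi]

/-!
Weak descents, weak ascents and strict descents at `i` are pairwise exclusive, so together
with "none of them" (strict ascents) they partition the positions. Two of the three
exclusions are arithmetic; the third uses that `v` is a signed involution: if
`v(i) = -(i+1)` then `v(i+1) = -v(-(i+1)) = -i > v(i)`.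
-/

theorem exactly_one_of_pairwise_not {P Q R : Prop}
    (hPQ : P → ¬Q) (hPR : P → ¬R) (hQR : Q → ¬R) :
    (P ∧ ¬Q ∧ ¬R) ∨ (Q ∧ ¬P ∧ ¬R) ∨ (R ∧ ¬P ∧ ¬Q) ∨ (¬P ∧ ¬Q ∧ ¬R) := by
  tauto

namespace SignedPerm

variable (v : ℤ → ℤ) (n i : ℤ)

def IsWeakDescent : Prop := v i = i + 1 ∨ v i = -(i + 1)

def IsWeakAscent : Prop := (n < v i ∧ v i < v (i + 1)) ∨ (v i < v (i + 1) ∧ v (i + 1) < -n)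

def IsStrictDescent : Prop := v i ≠ i + 1 ∧ v (i + 1) < v i ∧ v (i + 1) ≠ i

variable {v n i}

theorem IsWeakDescent.not_isWeakAscent (hi : 0 ≤ i) (hin : i + 1 ≤ n)
    (h : IsWeakDescent v i) : ¬IsWeakAscent v n i := by
  unfold IsWeakDescent at h
  unfold IsWeakAscent
  omega

theorem IsWeakDescent.not_isStrictDescent (hneg : ∀ x, v (-x) = -v x)
    (hinv : ∀ x, v (v x) = x) (h : IsWeakDescent v i) : ¬IsStrictDescent v i := by
  rintro ⟨hne, hlt, -⟩
  rcases h with h | h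
  · exact hne h
  · have hnext : v (i + 1) = -i := by
      rw [← neg_neg (v (i + 1)), ← hneg, ← h, hinv]
    omega

theorem IsWeakAscent.not_isStrictDescent (h : IsWeakAscent v n i) : ¬IsStrictDescent v i := by
  rintro ⟨-, hlt, -⟩
  rcases h with ⟨-, h⟩ | ⟨h, -⟩ <;> omega

end SignedPerm

open SignedPerm in
theorem descent_ascent_partition_general (n : ℕ) (v : Equiv.Perm ℤ) (hv : v ∈ WBC (2 * n))
    (hinv : v * v = 1)
    (i : ℕ) (hi2 : i + 1 ≤ n) :
    ((v (i : ℤ) = (i : ℤ) + 1 ∨ v (i : ℤ) = -((i : ℤ) + 1)) ∧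
      ¬(((n : ℤ) < v (i : ℤ) ∧ v (i : ℤ) < v ((i : ℤ) + 1)) ∨
          (v (i : ℤ) < v ((i : ℤ) + 1) ∧ v ((i : ℤ) + 1) < -(n : ℤ))) ∧
      ¬(v (i : ℤ) ≠ (i : ℤ) + 1 ∧ v ((i : ℤ) + 1) < v (i : ℤ) ∧ v ((i : ℤ) + 1) ≠ (i : ℤ))) ∨
    ((((n : ℤ) < v (i : ℤ) ∧ v (i : ℤ) < v ((i : ℤ) + 1)) ∨
        (v (i : ℤ) < v ((i : ℤ) + 1) ∧ v ((i : ℤ) + 1) < -(n : ℤ))) ∧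
      ¬(v (i : ℤ) = (i : ℤ) + 1 ∨ v (i : ℤ) = -((i : ℤ) + 1)) ∧
      ¬(v (i : ℤ) ≠ (i : ℤ) + 1 ∧ v ((i : ℤ) + 1) < v (i : ℤ) ∧ v ((i : ℤ) + 1) ≠ (i : ℤ))) ∨
    ((v (i : ℤ) ≠ (i : ℤ) + 1 ∧ v ((i : ℤ) + 1) < v (i : ℤ) ∧ v ((i : ℤ) + 1) ≠ (i : ℤ)) ∧
      ¬(v (i : ℤ) = (i : ℤ) + 1 ∨ v (i : ℤ) = -((i : ℤ) + 1)) ∧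
      ¬(((n : ℤ) < v (i : ℤ) ∧ v (i : ℤ) < v ((i : ℤ) + 1)) ∨
          (v (i : ℤ) < v ((i : ℤ) + 1) ∧ v ((i : ℤ) + 1) < -(n : ℤ)))) ∨
    (¬(v (i : ℤ) = (i : ℤ) + 1 ∨ v (i : ℤ) = -((i : ℤ) + 1)) ∧
      ¬(((n : ℤ) < v (i : ℤ) ∧ v (i : ℤ) < v ((i : ℤ) + 1)) ∨
          (v (i : ℤ) < v ((i : ℤ) + 1) ∧ v ((i : ℤ) + 1) < -(n : ℤ))) ∧
      ¬(v (i : ℤ) ≠ (i : ℤ) + 1 ∧ v ((i : ℤ) + 1) < v (i : ℤ) ∧ v ((i : ℤ) + 1) ≠ (i : ℤ))) := by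
  have hneg : ∀ x, v (-x) = -v x := hv.1
  have hvv : ∀ x, v (v x) = x := fun x => by
    simpa only [Equiv.Perm.mul_apply, Equiv.Perm.one_apply] using congrArg (· x) hinv
  exact exactly_one_of_pairwise_not
    (IsWeakDescent.not_isWeakAscent (Int.natCast_nonneg i) (by exact_mod_cast hi2))
    (IsWeakDescent.not_isStrictDescent hneg hvv) IsWeakAscent.not_isStrictDescent

/-- For a fixed-point-free signed involution `v ∈ G^{BC,m}_n` (so `v ∈ I^FPF_{2n}`
with `v(i+1) ≥ min{i, v(i)}` for all `i > n`) and `i ∈ [n-1]`, exactly one of the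
following holds: (weak descent) `v(i) = i+1` or `v(i) = -(i+1)`; (weak ascent)
`n < v(i) < v(i+1)` or `v(i) < v(i+1) < -n`; (strict descent)
`i+1 ≠ v(i) > v(i+1) ≠ i`; (strict ascent) otherwise. -/
theorem descent_ascent_partition (n : ℕ) (v : Equiv.Perm ℤ) (hv : v ∈ WBC (2 * n))
    (hinv : v * v = 1) (hfpf : ∀ i : ℤ, 1 ≤ i → i ≤ (2 * n : ℕ) → |v i| ≠ i)
    (hG : ∀ i : ℤ, (n : ℤ) < i → i < (2 * n : ℕ) → min i (v i) ≤ v (i + 1))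
    (i : ℕ) (hi1 : 1 ≤ i) (hi2 : i + 1 ≤ n) :
    ((v (i : ℤ) = (i : ℤ) + 1 ∨ v (i : ℤ) = -((i : ℤ) + 1)) ∧
      ¬(((n : ℤ) < v (i : ℤ) ∧ v (i : ℤ) < v ((i : ℤ) + 1)) ∨
          (v (i : ℤ) < v ((i : ℤ) + 1) ∧ v ((i : ℤ) + 1) < -(n : ℤ))) ∧
      ¬(v (i : ℤ) ≠ (i : ℤ) + 1 ∧ v ((i : ℤ) + 1) < v (i : ℤ) ∧ v ((i : ℤ) + 1) ≠ (i : ℤ))) ∨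
    ((((n : ℤ) < v (i : ℤ) ∧ v (i : ℤ) < v ((i : ℤ) + 1)) ∨
        (v (i : ℤ) < v ((i : ℤ) + 1) ∧ v ((i : ℤ) + 1) < -(n : ℤ))) ∧
      ¬(v (i : ℤ) = (i : ℤ) + 1 ∨ v (i : ℤ) = -((i : ℤ) + 1)) ∧
      ¬(v (i : ℤ) ≠ (i : ℤ) + 1 ∧ v ((i : ℤ) + 1) < v (i : ℤ) ∧ v ((i : ℤ) + 1) ≠ (i : ℤ))) ∨
    ((v (i : ℤ) ≠ (i : ℤ) + 1 ∧ v ((i : ℤ) + 1) < v (i : ℤ) ∧ v ((i : ℤ) + 1) ≠ (i : ℤ)) ∧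
      ¬(v (i : ℤ) = (i : ℤ) + 1 ∨ v (i : ℤ) = -((i : ℤ) + 1)) ∧
      ¬(((n : ℤ) < v (i : ℤ) ∧ v (i : ℤ) < v ((i : ℤ) + 1)) ∨
          (v (i : ℤ) < v ((i : ℤ) + 1) ∧ v ((i : ℤ) + 1) < -(n : ℤ)))) ∨
    (¬(v (i : ℤ) = (i : ℤ) + 1 ∨ v (i : ℤ) = -((i : ℤ) + 1)) ∧
      ¬(((n : ℤ) < v (i : ℤ) ∧ v (i : ℤ) < v ((i : ℤ) + 1)) ∨
          (v (i : ℤ) < v ((i : ℤ) + 1) ∧ v ((i : ℤ) + 1) < -(n : ℤ))) ∧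
      ¬(v (i : ℤ) ≠ (i : ℤ) + 1 ∧ v ((i : ℤ) + 1) < v (i : ℤ) ∧ v ((i : ℤ) + 1) ≠ (i : ℤ))) :=
  descent_ascent_partition_general n v hv hinv i hi2
end
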